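/- arXiv:1909.00363 — 6 statements merged into one kernel-verified Lean document; each statement's English description precedes it below -/
import Mathlib

section
/- For any probability space (Ω, Σ, μ) and any measurable non-negative function f ∈ L¹(μ), the entropy Ent_μ(f) = ∫ f log f dμ − (∫ f dμ) log(∫ f dμ) satisfies the duality formula Ent_μ(f) = sup { ∫ f g dμ : g measurable, bounded above and below, with ∫ e^g dμ ≤ 1 }. -/
/-!
For admissible `g` and `m = ∫ f dμ > 0`, the Fenchel–Young inequality `a b ≤ a log a - a + e^b`
at `a = f`, `b = g + log m` integrates to `∫ f g ≤ ∫ f log f - m log m - m + m ∫ e^g`, and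
`∫ e^g ≤ 1` gives `∫ f g ≤ Ent_μ(f)`.

Conversely, with `ε = e^{-n}` the bounded function `g_n = min (log (max (f/m) ε)) n - ε` satisfies
`e^{g_n} ≤ (f/m + ε) e^{-ε}`, hence `∫ e^{g_n} ≤ (1 + ε) e^{-ε} ≤ 1`, and
`f g_n ≥ f (min (log (f/m)) n - ε)`. These lower bounds increase in `n` to `f log (f/m)`, so by
monotone convergence their integrals tend to `∫ f log (f/m) = Ent_μ(f)`, or to `+∞` when
`f log f` is not integrable.
-/

open MeasureTheory
open scoped Classical

/-- The entropy `Ent_μ(f) = ∫ f log f dμ − (∫ f dμ) log(∫ f dμ)`, an extended real number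
(equal to `⊤` when `f log f` is not integrable, corresponding to infinite entropy). -/
noncomputable def entropy {Ω : Type*} [MeasurableSpace Ω] (μ : Measure Ω) (f : Ω → ℝ) : EReal :=
  if Integrable (fun x => f x * Real.log (f x)) μ then
    (((∫ x, f x * Real.log (f x) ∂μ) - (∫ x, f x ∂μ) * Real.log (∫ x, f x ∂μ) : ℝ) : EReal)
  else ⊤

open Filter Topology Real

theorem mul_le_mul_log_sub_add_exp {a : ℝ} (ha : 0 ≤ a) (b : ℝ) :
    a * b ≤ a * log a - a + exp b := by
  rcases ha.eq_or_lt with rfl | ha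
  · simpa using (exp_pos b).le
  · have h := mul_le_mul_of_nonneg_left (add_one_le_exp (b - log a)) ha.le
    rw [exp_sub, exp_log ha, mul_div_cancel₀ _ ha.ne'] at h
    linarith

theorem mul_log_div {a m : ℝ} (hm : m ≠ 0) : a * log (a / m) = a * log a - a * log m := by
  rcases eq_or_ne a 0 with rfl | ha
  · simp
  · rw [log_div ha hm]
    ring

theorem sub_le_mul_log_div {a m : ℝ} (ha : 0 ≤ a) (hm : 0 < m) : a - m ≤ a * log (a / m) := by
  have h := mul_le_mul_log_sub_add_exp ha (log m)
  rw [exp_log hm] at h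
  rw [mul_log_div hm.ne']
  linarith

theorem exp_min_log_max_le {r ε : ℝ} (hr : 0 ≤ r) (hε : 0 < ε) (N : ℝ) :
    exp (min (log (max r ε)) N) ≤ r + ε :=
  calc exp (min (log (max r ε)) N) ≤ exp (log (max r ε)) := exp_le_exp.2 (min_le_left _ _)
    _ = max r ε := exp_log (lt_max_of_lt_right hε)
    _ ≤ r + ε := max_le_add_of_nonneg hr hε.le

section MonotoneConvergence

variable {Ω : Type*} [MeasurableSpace Ω] {μ : Measure Ω} {f : ℕ → Ω → ℝ} {F : Ω → ℝ}

theorem tendsto_integral_atTop_of_monotone_of_not_integrable (hf : ∀ n, Integrable (f n) μ)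
    (hF : AEStronglyMeasurable F μ) (hF_int : ¬Integrable F μ)
    (h_mono : ∀ᵐ x ∂μ, Monotone fun n ↦ f n x)
    (h_tendsto : ∀ᵐ x ∂μ, Tendsto (fun n ↦ f n x) atTop (𝓝 (F x))) :
    Tendsto (fun n ↦ ∫ x, f n x ∂μ) atTop atTop := by
  have h_nonneg : ∀ n, 0 ≤ᵐ[μ] fun x ↦ f n x - f 0 x := fun n ↦ by
    filter_upwards [h_mono] with x hx using sub_nonneg.2 (hx n.zero_le)
  have hF_nonneg : 0 ≤ᵐ[μ] fun x ↦ F x - f 0 x := by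
    filter_upwards [h_mono, h_tendsto] with x hx hxF using sub_nonneg.2 (hx.ge_of_tendsto hxF 0)
  have h_top : ∫⁻ x, ENNReal.ofReal (F x - f 0 x) ∂μ = ⊤ := by
    by_contra h
    have := (lintegral_ofReal_ne_top_iff_integrable (hF.sub (hf 0).1) hF_nonneg).1 h
    exact hF_int (by simpa using this.add (hf 0))
  have h_lim := lintegral_tendsto_of_tendsto_of_monotone (μ := μ)
    (f := fun n x ↦ ENNReal.ofReal (f n x - f 0 x))
    (fun n ↦ ((hf n).sub (hf 0)).aemeasurable.ennreal_ofReal)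
    (by filter_upwards [h_mono] with x hx m n hmn using
          ENNReal.ofReal_le_ofReal (sub_le_sub_right (hx hmn) _))
    (by filter_upwards [h_tendsto] with x hx using
          (ENNReal.continuous_ofReal.tendsto _).comp (hx.sub_const _))
  have h_eq : ∀ n, ∫⁻ x, ENNReal.ofReal (f n x - f 0 x) ∂μ
      = ENNReal.ofReal ((∫ x, f n x ∂μ) - ∫ x, f 0 x ∂μ) := fun n ↦ by
    rw [← integral_sub (hf n) (hf 0)]
    exact (ofReal_integral_eq_lintegral_ofReal ((hf n).sub (hf 0)) (h_nonneg n)).symm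
  simp_rw [h_eq, h_top, ENNReal.tendsto_ofReal_nhds_top] at h_lim
  simpa using h_lim.atTop_add (tendsto_const_nhds (x := ∫ x, f 0 x ∂μ))

theorem tendsto_coe_integral_of_monotone (hf : ∀ n, Integrable (f n) μ)
    (hF : AEStronglyMeasurable F μ) (h_mono : ∀ᵐ x ∂μ, Monotone fun n ↦ f n x)
    (h_tendsto : ∀ᵐ x ∂μ, Tendsto (fun n ↦ f n x) atTop (𝓝 (F x))) :
    Tendsto (fun n ↦ ((∫ x, f n x ∂μ : ℝ) : EReal)) atTop
      (𝓝 (if Integrable F μ then ((∫ x, F x ∂μ : ℝ) : EReal) else ⊤)) := by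
  split_ifs with hF_int
  · exact EReal.tendsto_coe.2 (integral_tendsto_of_tendsto_of_monotone hf hF_int h_mono h_tendsto)
  · exact EReal.tendsto_coe_nhds_top_iff.2
      (tendsto_integral_atTop_of_monotone_of_not_integrable hf hF hF_int h_mono h_tendsto)

end MonotoneConvergence

def entropyDualValues {Ω : Type*} [MeasurableSpace Ω] (μ : Measure Ω) (f : Ω → ℝ) :
    Set EReal :=
  {r : EReal | ∃ g : Ω → ℝ, Measurable g ∧ (∃ c C : ℝ, ∀ x, c ≤ g x ∧ g x ≤ C) ∧
    (∫ x, Real.exp (g x) ∂μ) ≤ 1 ∧ r = ((∫ x, f x * g x ∂μ : ℝ) : EReal)}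

section Entropy

variable {Ω : Type*} [MeasurableSpace Ω] {μ : Measure Ω} {f g : Ω → ℝ}

theorem integrable_mul_of_bounds (hfi : Integrable f μ) (hg : Measurable g) {c C : ℝ}
    (hb : ∀ x, c ≤ g x ∧ g x ≤ C) : Integrable (fun x ↦ f x * g x) μ :=
  hfi.mul_bdd hg.aestronglyMeasurable (ae_of_all _ fun x ↦ abs_le_max_abs_abs (hb x).1 (hb x).2)

theorem integrable_exp_of_le [IsFiniteMeasure μ] (hg : Measurable g) {C : ℝ}
    (hC : ∀ x, g x ≤ C) : Integrable (fun x ↦ exp (g x)) μ :=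
  .of_bound hg.exp.aestronglyMeasurable (exp C)
    (ae_of_all _ fun x ↦ by simpa [abs_of_pos (exp_pos _)] using hC x)

theorem entropy_eq_zero_of_ae_eq_zero (hf : f =ᵐ[μ] 0) : entropy μ f = 0 := by
  have h : (fun x ↦ f x * log (f x)) =ᵐ[μ] 0 := by
    filter_upwards [hf] with x hx using by simp [hx]
  rw [entropy, if_pos ((integrable_zero _ _ μ).congr h.symm), integral_congr_ae h,
    integral_congr_ae hf]
  simp

theorem sSup_entropyDualValues_of_ae_eq_zero [IsProbabilityMeasure μ] (hf : f =ᵐ[μ] 0) :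
    sSup (entropyDualValues μ f) = 0 := by
  have h_zero : ∀ g : Ω → ℝ, ∫ x, f x * g x ∂μ = 0 := fun g ↦
    integral_eq_zero_of_ae (by filter_upwards [hf] with x hx using by simp [hx])
  refine le_antisymm (sSup_le ?_) (le_sSup ⟨0, measurable_const,
    ⟨0, 0, fun _ ↦ ⟨le_rfl, le_rfl⟩⟩, by simp, by simp⟩)
  rintro _ ⟨g, -, -, -, rfl⟩
  simp [h_zero]

theorem entropy_eq_ite_integral_mul_log_div (hfi : Integrable f μ) (hm : ∫ x, f x ∂μ ≠ 0) :
    entropy μ f = if Integrable (fun x ↦ f x * log (f x / ∫ y, f y ∂μ)) μ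
      then ((∫ x, f x * log (f x / ∫ y, f y ∂μ) ∂μ : ℝ) : EReal) else ⊤ := by
  have h_const := hfi.mul_const (log (∫ y, f y ∂μ))
  have h_iff : Integrable (fun x ↦ f x * log (f x / ∫ y, f y ∂μ)) μ ↔
      Integrable (fun x ↦ f x * log (f x)) μ := by
    simp_rw [mul_log_div hm, sub_eq_add_neg]
    exact integrable_add_iff_integrable_left' h_const.neg
  rw [entropy, h_iff]
  split_ifs with hflog
  · simp_rw [mul_log_div hm]
    rw [integral_sub hflog h_const, integral_mul_const]
  · rfl

theorem coe_integral_mul_le_entropy (hf0 : ∀ x, 0 ≤ f x) (hfi : Integrable f μ)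
    (hm : 0 < ∫ x, f x ∂μ) (hfg : Integrable (fun x ↦ f x * g x) μ)
    (hexp_int : Integrable (fun x ↦ exp (g x)) μ) (hexp : ∫ x, exp (g x) ∂μ ≤ 1) :
    ((∫ x, f x * g x ∂μ : ℝ) : EReal) ≤ entropy μ f := by
  rw [entropy]
  split_ifs with hflog
  · set m := ∫ x, f x ∂μ
    have h_young : ∀ x, f x * g x ≤ f x * log (f x) - f x * log m - f x + m * exp (g x) :=
      fun x ↦ by
        have h := mul_le_mul_log_sub_add_exp (hf0 x) (g x + log m)
        rw [exp_add, exp_log hm] at h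
        linarith
    have h_int₁ : Integrable (fun x ↦ f x * log (f x) - f x * log m) μ :=
      hflog.sub (hfi.mul_const _)
    have h_int₂ : Integrable (fun x ↦ f x * log (f x) - f x * log m - f x) μ := h_int₁.sub hfi
    have h_integrated : ∫ x, f x * g x ∂μ
        ≤ ∫ x, (f x * log (f x) - f x * log m - f x + m * exp (g x)) ∂μ :=
      integral_mono hfg (h_int₂.add (hexp_int.const_mul m)) h_young
    rw [integral_add h_int₂ (hexp_int.const_mul m), integral_sub h_int₁ hfi,
      integral_sub hflog (hfi.mul_const _), integral_mul_const, integral_const_mul] at h_integrated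
    exact EReal.coe_le_coe_iff.2 (by nlinarith)
  · exact le_top

theorem integrable_mul_min_log_div_sub [IsFiniteMeasure μ] (hf : Measurable f)
    (hf0 : ∀ x, 0 ≤ f x) (hfi : Integrable f μ) {m : ℝ} (hm : 0 < m) (n : ℕ) :
    Integrable (fun x ↦ f x * (min (log (f x / m)) n - exp (-n))) μ := by
  refine Integrable.mono' ((integrable_const m).add (hfi.const_mul (n + 1)))
    (by fun_prop : Measurable _).aestronglyMeasurable (ae_of_all _ fun x ↦ ?_)
  have h_fexp : f x * exp (-n) ≤ f x :=
    mul_le_of_le_one_right (hf0 x) (exp_le_one_iff.2 (by simp))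
  have h_fn : 0 ≤ f x * n := mul_nonneg (hf0 x) n.cast_nonneg
  have h_min : -m ≤ min (f x * log (f x / m)) (f x * n) :=
    le_min (by linarith [sub_le_mul_log_div (hf0 x) hm, hf0 x]) (by linarith)
  rw [Pi.add_apply, norm_eq_abs, abs_le, mul_sub, mul_min_of_nonneg _ _ (hf0 x)]
  constructor <;> linarith [min_le_right (f x * log (f x / m)) (f x * n),
    mul_nonneg (hf0 x) (exp_pos (-n : ℝ)).le]

theorem coe_integral_mul_min_log_div_sub_le_sSup [IsProbabilityMeasure μ] (hf : Measurable f)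
    (hf0 : ∀ x, 0 ≤ f x) (hfi : Integrable f μ) (hm : 0 < ∫ x, f x ∂μ) (n : ℕ) :
    ((∫ x, f x * (min (log (f x / ∫ y, f y ∂μ)) n - exp (-n)) ∂μ : ℝ) : EReal) ≤
      sSup (entropyDualValues μ f) := by
  set m := ∫ y, f y ∂μ
  set ε := exp (-(n : ℝ))
  set g : Ω → ℝ := fun x ↦ min (log (max (f x / m) ε)) n - ε
  have hε : 0 < ε := exp_pos _
  have hg : Measurable g := by fun_prop
  have hg_bounds : ∀ x, -n - ε ≤ g x ∧ g x ≤ n - ε := fun x ↦ by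
    have : -(n : ℝ) ≤ log (max (f x / m) ε) :=
      (le_log_iff_exp_le (by positivity)).2 (le_max_right _ _)
    exact ⟨sub_le_sub_right (le_min this (by simp)) ε, sub_le_sub_right (min_le_right _ _) ε⟩
  have hexp_le : ∀ x, exp (g x) ≤ (f x / m + ε) * exp (-ε) := fun x ↦ by
    simp only [g, sub_eq_add_neg, exp_add]
    gcongr
    exact exp_min_log_max_le (div_nonneg (hf0 x) hm.le) hε n
  have hexp : ∫ x, exp (g x) ∂μ ≤ 1 :=
    calc ∫ x, exp (g x) ∂μ ≤ ∫ x, (f x / m + ε) * exp (-ε) ∂μ :=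
          integral_mono (integrable_exp_of_le hg fun x ↦ (hg_bounds x).2)
            (((hfi.div_const m).add (integrable_const ε)).mul_const _) hexp_le
      _ = (1 + ε) * exp (-ε) := by
          rw [integral_mul_const, integral_add (hfi.div_const m) (integrable_const ε),
            integral_div, div_self hm.ne', integral_const]
          simp
      _ ≤ exp ε * exp (-ε) := by gcongr; linarith [add_one_le_exp ε]
      _ = 1 := by rw [← exp_add, add_neg_cancel, exp_zero]
  have h_le : ∀ x, f x * (min (log (f x / m)) n - ε) ≤ f x * g x := fun x ↦ by
    rcases (hf0 x).eq_or_lt with h | h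
    · simp [← h]
    · simp only [g]
      gcongr
      exact le_max_left _ _
  refine le_sSup_of_le ⟨g, hg, ⟨_, _, hg_bounds⟩, hexp, rfl⟩ (EReal.coe_le_coe_iff.2 ?_)
  exact integral_mono (integrable_mul_min_log_div_sub hf hf0 hfi hm n)
    (integrable_mul_of_bounds hfi hg hg_bounds) h_le

theorem entropy_le_sSup_entropyDualValues [IsProbabilityMeasure μ] (hf : Measurable f)
    (hf0 : ∀ x, 0 ≤ f x) (hfi : Integrable f μ) (hm : 0 < ∫ x, f x ∂μ) :
    entropy μ f ≤ sSup (entropyDualValues μ f) := by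
  set m := ∫ y, f y ∂μ
  have h_mono : ∀ x, Monotone fun n : ℕ ↦ f x * (min (log (f x / m)) n - exp (-n)) :=
    fun x a b hab ↦ by
      have hab' : (a : ℝ) ≤ b := Nat.cast_le.2 hab
      exact mul_le_mul_of_nonneg_left
        (sub_le_sub (min_le_min_left _ hab') (exp_le_exp.2 (neg_le_neg hab'))) (hf0 x)
  have h_tendsto : ∀ x, Tendsto (fun n : ℕ ↦ f x * (min (log (f x / m)) n - exp (-n))) atTop
      (𝓝 (f x * log (f x / m))) := fun x ↦ by
    have h_min : (fun n : ℕ ↦ log (f x / m)) =ᶠ[atTop] fun n ↦ min (log (f x / m)) n := by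
      filter_upwards [tendsto_natCast_atTop_atTop.eventually_ge_atTop (log (f x / m))]
        with n hn using (min_eq_left hn).symm
    simpa using ((tendsto_const_nhds.congr' h_min).sub
      (tendsto_exp_neg_atTop_nhds_zero.comp tendsto_natCast_atTop_atTop)).const_mul (f x)
  have h_lim := tendsto_coe_integral_of_monotone (integrable_mul_min_log_div_sub hf hf0 hfi hm)
    (by fun_prop : Measurable fun x ↦ f x * log (f x / m)).aestronglyMeasurable
    (ae_of_all _ h_mono) (ae_of_all _ h_tendsto)
  rw [← entropy_eq_ite_integral_mul_log_div hfi hm.ne'] at h_lim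
  exact le_of_tendsto' h_lim (coe_integral_mul_min_log_div_sub_le_sSup hf hf0 hfi hm)

end Entropy

/-- Duality formula for entropy: for a probability space `(Ω, μ)` and a non-negative
`f ∈ L¹(μ)`, `Ent_μ(f) = sup { ∫ f g dμ : g measurable and bounded, ∫ e^g dμ ≤ 1 }`. -/
theorem entropy_duality {Ω : Type*} [MeasurableSpace Ω] (μ : Measure Ω) [IsProbabilityMeasure μ]
    (f : Ω → ℝ) (hf : Measurable f) (hf0 : ∀ x, 0 ≤ f x) (hfi : Integrable f μ) :
    entropy μ f =
      sSup {r : EReal | ∃ g : Ω → ℝ, Measurable g ∧ (∃ c C : ℝ, ∀ x, c ≤ g x ∧ g x ≤ C) ∧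
        (∫ x, Real.exp (g x) ∂μ) ≤ 1 ∧ r = ((∫ x, f x * g x ∂μ : ℝ) : EReal)} := by
  change entropy μ f = sSup (entropyDualValues μ f)
  rcases (integral_nonneg (f := f) hf0).eq_or_lt with hm | hm
  · have hf_ae : f =ᵐ[μ] 0 := (integral_eq_zero_iff_of_nonneg hf0 hfi).1 hm.symm
    rw [entropy_eq_zero_of_ae_eq_zero hf_ae, sSup_entropyDualValues_of_ae_eq_zero hf_ae]
  · refine le_antisymm (entropy_le_sSup_entropyDualValues hf hf0 hfi hm) (sSup_le ?_)
    rintro _ ⟨g, hg, ⟨c, C, hb⟩, hexp, rfl⟩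
    exact coe_integral_mul_le_entropy hf0 hfi hm (integrable_mul_of_bounds hfi hg hb)
      (integrable_exp_of_le hg fun x ↦ (hb x).2) hexp
end

section
/- (Tensorization of entropy.) Let (Ω_i, Σ_i, μ_i), i = 1, …, n, be probability spaces and let P = μ_1 ⊗ ⋯ ⊗ μ_n be the product probability measure on X = Ω_1 × ⋯ × Ω_n. For every non-negative function f on X in L¹(P), Ent_P(f) ≤ Σ_{i=1}^n ∫_X Ent_{μ_i}(f_i) dP, where for each i and each x ∈ X, f_i is the function on Ω_i given by f_i(x_i) = f(x_1, …, x_{i−1}, x_i, x_{i+1}, …, x_n) with the other coordinates fixed, and the integration in dP is over the remaining coordinates. -/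
/-!
Write the entropy as `Ent_μ(g) = ∫ φ(∫ g dμ, g) dμ` with `φ(m, u) = u log u - u log m - u + m ≥ 0`
(`entDensity`), so that entropies become lower Lebesgue integrals in `[0, ∞]` and no integrability
of `f log f` or of its slices has to be tracked.

For two factors, let `F(x) = ∫ f(x, ·) dν`, `G(y) = ∫ f(·, y) dμ` and `m = ∫ f`. The identity
`φ(m, u) = φ(F, u) + u log (F / m) + m - F` and the Young inequality
`u log (F / m) ≤ φ(G, u) - G + G F / m` give the pointwise bound
`φ(m, f) + F + G ≤ φ(F, f) + φ(G, f) + m + F G / m`. Each of `F`, `G`, `m` and `F G / m` integrates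
to `m` over `μ ⊗ ν`, so integrating and cancelling the finite `2m` leaves
`Ent(f) ≤ ∫ Ent_μ(f(·, y)) dν + ∫ Ent_ν(f(x, ·)) dμ`. The `n`-fold inequality follows by induction,
splitting off the first coordinate.
-/

open MeasureTheory
open scoped Classical ENNReal

/-- The canonical map from `EReal` to `ℝ≥0∞` (sending `⊤` to `⊤` and negative values to `0`). -/
noncomputable def erealToENNReal (x : EReal) : ℝ≥0∞ :=
  if x = ⊤ then ⊤ else ENNReal.ofReal x.toReal

open Real

noncomputable def entDensity (m u : ℝ) : ℝ := u * log u - u * log m - u + m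

@[simp]
lemma entDensity_zero_right (m : ℝ) : entDensity m 0 = m := by simp [entDensity]

@[simp]
lemma entDensity_self (c : ℝ) : entDensity c c = 0 := by unfold entDensity; ring

lemma entDensity_eq_mul_log_add (m u : ℝ) :
    entDensity m u = u * log u + (m - u * log m - u) := by
  unfold entDensity; ring

lemma mul_le_entDensity_sub_add_mul_exp {m u : ℝ} (hm : 0 ≤ m) (hu : 0 ≤ u)
    (h : u ≠ 0 → 0 < m) (v : ℝ) : u * v ≤ entDensity m u - m + m * exp v := by
  rcases hu.eq_or_lt with rfl | hu
  · simpa using mul_nonneg hm (exp_pos v).le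
  have hm := h hu.ne'
  set w := v - log u + log m
  have hexp : m * exp v = u * exp w := by
    rw [exp_add, exp_sub, exp_log hu, exp_log hm]
    field_simp
  have := mul_le_mul_of_nonneg_left (add_one_le_exp w) hu.le
  unfold entDensity
  linarith

lemma entDensity_nonneg {m u : ℝ} (hm : 0 ≤ m) (hu : 0 ≤ u) (h : u ≠ 0 → 0 < m) :
    0 ≤ entDensity m u := by
  simpa using mul_le_entDensity_sub_add_mul_exp hm hu h 0

lemma entDensity_add_le {m a b u : ℝ} (hm : 0 ≤ m) (ha : 0 ≤ a) (hb : 0 ≤ b) (hu : 0 ≤ u)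
    (h : u ≠ 0 → 0 < m ∧ 0 < a ∧ 0 < b) :
    entDensity m u + a + b ≤ entDensity a u + entDensity b u + m + a / m * b := by
  rcases hu.eq_or_lt with rfl | hu
  · simp only [entDensity_zero_right]
    linarith [mul_nonneg (div_nonneg ha hm) hb]
  obtain ⟨hm, ha, hb⟩ := h hu.ne'
  have hsplit : entDensity m u = entDensity a u + u * (log a - log m) + m - a := by
    unfold entDensity; ring
  have hyoung := mul_le_entDensity_sub_add_mul_exp hb.le hu.le (fun _ => hb) (log a - log m)
  rw [exp_sub, exp_log ha, exp_log hm] at hyoung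
  linarith

lemma ofReal_add_add_le_of_le {a b c d e m w : ℝ} (ha : 0 ≤ a) (hb : 0 ≤ b) (hc : 0 ≤ c)
    (h : a + b + c ≤ d + e + m + w) :
    ENNReal.ofReal a + ENNReal.ofReal b + ENNReal.ofReal c
      ≤ ENNReal.ofReal d + ENNReal.ofReal e + ENNReal.ofReal m + ENNReal.ofReal w := by
  rw [← ENNReal.ofReal_add ha hb, ← ENNReal.ofReal_add (add_nonneg ha hb) hc]
  refine (ENNReal.ofReal_le_ofReal h).trans ?_
  grw [ENNReal.ofReal_add_le, ENNReal.ofReal_add_le, ENNReal.ofReal_add_le]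

@[fun_prop]
lemma Measurable.entDensity {α : Type*} [MeasurableSpace α] {m u : α → ℝ} (hm : Measurable m)
    (hu : Measurable u) : Measurable fun x => entDensity (m x) (u x) := by
  unfold _root_.entDensity
  fun_prop

noncomputable def lentropy {Ω : Type*} [MeasurableSpace Ω] (μ : Measure Ω) (g : Ω → ℝ) : ℝ≥0∞ :=
  ∫⁻ x, ENNReal.ofReal (entDensity (∫ z, g z ∂μ) (g x)) ∂μ

section Lentropy

variable {Ω : Type*} [MeasurableSpace Ω] {μ : Measure Ω} {g : Ω → ℝ}

lemma ae_integral_pos_of_ne_zero (hg0 : 0 ≤ᵐ[μ] g) (hgi : Integrable g μ) :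
    ∀ᵐ x ∂μ, g x ≠ 0 → 0 < ∫ z, g z ∂μ := by
  rcases (integral_nonneg_of_ae hg0).eq_or_lt with h | h
  · filter_upwards [(integral_eq_zero_iff_of_nonneg_ae hg0 hgi).mp h.symm] with x hx hne
    exact absurd hx hne
  · exact ae_of_all _ fun _ _ => h

lemma integrable_of_integrable_mul_log [IsFiniteMeasure μ] (hg : Measurable g) (hg0 : ∀ x, 0 ≤ g x)
    (hint : Integrable (fun x => g x * log (g x)) μ) : Integrable g μ := by
  refine (hint.add (integrable_const 1)).mono' hg.aestronglyMeasurable (ae_of_all _ fun x => ?_)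
  have := entDensity_nonneg zero_le_one (hg0 x) fun _ => one_pos
  rw [Real.norm_of_nonneg (hg0 x), Pi.add_apply]
  simp only [entDensity, log_one, mul_zero] at this
  linarith

lemma integrable_entDensity_iff [IsFiniteMeasure μ] (hgi : Integrable g μ) (m : ℝ) :
    Integrable (fun x => entDensity m (g x)) μ ↔ Integrable (fun x => g x * log (g x)) μ := by
  have hlin : Integrable (fun x => m - g x * log m - g x) μ :=
    ((integrable_const m).sub (hgi.mul_const _)).sub hgi
  simp_rw [entDensity_eq_mul_log_add m]
  exact integrable_add_iff_integrable_left' hlin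

lemma integral_entDensity [IsProbabilityMeasure μ] (hgi : Integrable g μ)
    (hint : Integrable (fun x => g x * log (g x)) μ) :
    ∫ x, entDensity (∫ z, g z ∂μ) (g x) ∂μ
      = ∫ x, g x * log (g x) ∂μ - (∫ z, g z ∂μ) * log (∫ z, g z ∂μ) := by
  set m := ∫ z, g z ∂μ
  have hml : Integrable (fun x => m - g x * log m) μ := (integrable_const m).sub (hgi.mul_const _)
  have hlin : Integrable (fun x => m - g x * log m - g x) μ := hml.sub hgi
  simp_rw [entDensity_eq_mul_log_add m]
  rw [integral_add hint hlin, integral_sub hml hgi,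
    integral_sub (integrable_const m) (hgi.mul_const _), integral_mul_const]
  simp only [integral_const, probReal_univ, smul_eq_mul, one_mul]
  ring

lemma lentropy_eq_top_of_not_integrable [IsProbabilityMeasure μ] (hg : Measurable g)
    (hg0 : ∀ x, 0 ≤ g x) (hgi : ¬Integrable g μ) : lentropy μ g = ⊤ := by
  -- `∫ g = 0` by convention, and `log 0 = 0` makes `entDensity 0 u = u log u - u ≥ u - e`.
  have hle : ∀ x, ENNReal.ofReal (g x)
      ≤ ENNReal.ofReal (entDensity 0 (g x)) + ENNReal.ofReal (exp 1) := by
    intro x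
    have := entDensity_nonneg (exp_pos 1).le (hg0 x) fun _ => exp_pos 1
    refine (ENNReal.ofReal_le_ofReal ?_).trans ENNReal.ofReal_add_le
    simp only [entDensity, log_exp, log_zero] at this ⊢
    linarith
  have htop : ∫⁻ x, ENNReal.ofReal (g x) ∂μ = ⊤ := by
    by_contra h
    exact hgi ((lintegral_ofReal_ne_top_iff_integrable hg.aestronglyMeasurable
      (ae_of_all _ hg0)).mp h)
  have := lintegral_mono (μ := μ) hle
  rw [lintegral_add_right _ measurable_const, lintegral_const, measure_univ, mul_one, htop,
    top_le_iff, ENNReal.add_eq_top] at this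
  simpa [lentropy, integral_undef hgi, ENNReal.ofReal_ne_top] using this

lemma erealToENNReal_entropy [IsProbabilityMeasure μ] (hg : Measurable g) (hg0 : ∀ x, 0 ≤ g x) :
    erealToENNReal (entropy μ g) = lentropy μ g := by
  by_cases hgi : Integrable g μ
  swap
  · have hint : ¬Integrable (fun x => g x * log (g x)) μ :=
      fun h => hgi (integrable_of_integrable_mul_log hg hg0 h)
    simp [entropy, hint, erealToENNReal, lentropy_eq_top_of_not_integrable hg hg0 hgi]
  have hnn : 0 ≤ᵐ[μ] fun x => entDensity (∫ z, g z ∂μ) (g x) := by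
    filter_upwards [ae_integral_pos_of_ne_zero (ae_of_all _ hg0) hgi] with x hx
    exact entDensity_nonneg (integral_nonneg hg0) (hg0 x) hx
  by_cases hint : Integrable (fun x => g x * log (g x)) μ
  · rw [entropy, if_pos hint, ← integral_entDensity hgi hint, lentropy,
      ← ofReal_integral_eq_lintegral_ofReal ((integrable_entDensity_iff hgi _).mpr hint) hnn]
    simp [erealToENNReal]
  · rw [entropy, if_neg hint, lentropy, erealToENNReal, if_pos rfl, eq_comm, ← not_ne_iff,
      lintegral_ofReal_ne_top_iff_integrable
        (measurable_const.entDensity hg).aestronglyMeasurable hnn,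
      integrable_entDensity_iff hgi]
    exact hint

end Lentropy

section Prod

variable {A B : Type*} [MeasurableSpace A] [MeasurableSpace B] {μ : Measure A} {ν : Measure B}
  {f : A × B → ℝ}

lemma ae_integral_prod_right_pos [SFinite μ] [SFinite ν] (hf : Measurable f) (hf0 : ∀ p, 0 ≤ f p)
    (hfi : Integrable f (μ.prod ν)) : ∀ᵐ p ∂μ.prod ν, f p ≠ 0 → 0 < ∫ y, f (p.1, y) ∂ν := by
  have hF : Measurable fun x => ∫ y, f (x, y) ∂ν :=
    hf.stronglyMeasurable.integral_prod_right'.measurable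
  have hs : MeasurableSet {p : A × B | f p ≠ 0 → 0 < ∫ y, f (p.1, y) ∂ν} :=
    (hf (measurableSet_singleton 0)).compl.imp
      (measurableSet_lt measurable_const (hF.comp measurable_fst))
  rw [Measure.ae_prod_iff_ae_ae hs]
  filter_upwards [hfi.prod_right_ae] with x hx
  exact ae_integral_pos_of_ne_zero (ae_of_all _ fun y => hf0 _) hx

lemma ae_integral_prod_left_pos [SFinite μ] [SFinite ν] (hf : Measurable f) (hf0 : ∀ p, 0 ≤ f p)
    (hfi : Integrable f (μ.prod ν)) : ∀ᵐ p ∂μ.prod ν, f p ≠ 0 → 0 < ∫ x, f (x, p.2) ∂μ := by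
  have hG : Measurable fun y => ∫ x, f (x, y) ∂μ :=
    hf.stronglyMeasurable.integral_prod_left'.measurable
  have hs : MeasurableSet {p : A × B | f p ≠ 0 → 0 < ∫ x, f (x, p.2) ∂μ} :=
    (hf (measurableSet_singleton 0)).compl.imp
      (measurableSet_lt measurable_const (hG.comp measurable_snd))
  rw [Measure.ae_prod_iff_ae_ae hs, Measure.ae_ae_comm hs]
  filter_upwards [hfi.prod_left_ae] with y hy
  exact ae_integral_pos_of_ne_zero (ae_of_all _ fun x => hf0 _) hy

lemma lintegral_ofReal_comp_fst [IsProbabilityMeasure ν] {F : A → ℝ} (hF : Measurable F)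
    (hF0 : ∀ x, 0 ≤ F x) (hFi : Integrable F μ) :
    ∫⁻ p, ENNReal.ofReal (F p.1) ∂μ.prod ν = ENNReal.ofReal (∫ x, F x ∂μ) := by
  rw [lintegral_prod _ (by fun_prop), ofReal_integral_eq_lintegral_ofReal hFi (ae_of_all _ hF0)]
  simp

lemma lintegral_ofReal_comp_snd [SFinite ν] [IsProbabilityMeasure μ] {G : B → ℝ} (hG : Measurable G)
    (hG0 : ∀ y, 0 ≤ G y) (hGi : Integrable G ν) :
    ∫⁻ p, ENNReal.ofReal (G p.2) ∂μ.prod ν = ENNReal.ofReal (∫ y, G y ∂ν) := by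
  rw [lintegral_prod_symm _ (by fun_prop),
    ofReal_integral_eq_lintegral_ofReal hGi (ae_of_all _ hG0)]
  simp

lemma lintegral_ofReal_mul_prod [SFinite ν] {F : A → ℝ} {G : B → ℝ} (hF : Measurable F)
    (hG : Measurable G) (hF0 : ∀ x, 0 ≤ F x) (hG0 : ∀ y, 0 ≤ G y) (hFi : Integrable F μ)
    (hGi : Integrable G ν) :
    ∫⁻ p, ENNReal.ofReal (F p.1 * G p.2) ∂μ.prod ν
      = ENNReal.ofReal ((∫ x, F x ∂μ) * ∫ y, G y ∂ν) := by
  simp_rw [ENNReal.ofReal_mul (hF0 _)]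
  rw [lintegral_prod_mul (μ := μ) (ν := ν) (f := fun x => ENNReal.ofReal (F x))
      (g := fun y => ENNReal.ofReal (G y)) (by fun_prop) (by fun_prop),
    ENNReal.ofReal_mul (integral_nonneg hF0),
    ofReal_integral_eq_lintegral_ofReal hFi (ae_of_all _ hF0),
    ofReal_integral_eq_lintegral_ofReal hGi (ae_of_all _ hG0)]

theorem lentropy_prod_le [IsProbabilityMeasure μ] [IsProbabilityMeasure ν] (hf : Measurable f)
    (hf0 : ∀ p, 0 ≤ f p) (hfi : Integrable f (μ.prod ν)) :
    lentropy (μ.prod ν) f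
      ≤ ∫⁻ y, lentropy μ (fun x => f (x, y)) ∂ν + ∫⁻ x, lentropy ν (fun y => f (x, y)) ∂μ := by
  set m := ∫ p, f p ∂(μ.prod ν)
  set F := fun x => ∫ y, f (x, y) ∂ν
  set G := fun y => ∫ x, f (x, y) ∂μ
  have hF : Measurable F := hf.stronglyMeasurable.integral_prod_right'.measurable
  have hG : Measurable G := hf.stronglyMeasurable.integral_prod_left'.measurable
  have hF0 : ∀ x, 0 ≤ F x := fun x => integral_nonneg fun y => hf0 (x, y)
  have hG0 : ∀ y, 0 ≤ G y := fun y => integral_nonneg fun x => hf0 (x, y)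
  have hm0 : 0 ≤ m := integral_nonneg hf0
  have hFm : ∫ x, F x ∂μ = m := (integral_prod f hfi).symm
  have hGm : ∫ y, G y ∂ν = m := (integral_prod_symm f hfi).symm
  have hpt : ∀ᵐ p ∂μ.prod ν,
      ENNReal.ofReal (entDensity m (f p)) + ENNReal.ofReal (F p.1) + ENNReal.ofReal (G p.2)
        ≤ ENNReal.ofReal (entDensity (F p.1) (f p)) + ENNReal.ofReal (entDensity (G p.2) (f p))
          + ENNReal.ofReal m + ENNReal.ofReal (F p.1 / m * G p.2) := by
    filter_upwards [ae_integral_pos_of_ne_zero (ae_of_all _ hf0) hfi,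
      ae_integral_prod_right_pos hf hf0 hfi, ae_integral_prod_left_pos hf hf0 hfi] with p hm hFp hGp
    exact ofReal_add_add_le_of_le (entDensity_nonneg hm0 (hf0 p) hm) (hF0 _) (hG0 _)
      (entDensity_add_le hm0 (hF0 _) (hG0 _) (hf0 p) fun h => ⟨hm h, hFp h, hGp h⟩)
  have hR₁ : ∫⁻ p, ENNReal.ofReal (entDensity (G p.2) (f p)) ∂μ.prod ν
      = ∫⁻ y, lentropy μ (fun x => f (x, y)) ∂ν := lintegral_prod_symm _ (by fun_prop)
  have hR₂ : ∫⁻ p, ENNReal.ofReal (entDensity (F p.1) (f p)) ∂μ.prod ν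
      = ∫⁻ x, lentropy ν (fun y => f (x, y)) ∂μ := lintegral_prod _ (by fun_prop)
  have key := lintegral_mono_ae hpt
  simp (disch := fun_prop) only [lintegral_add_right'] at key
  rw [lintegral_ofReal_comp_fst hF hF0 hfi.integral_prod_left,
    lintegral_ofReal_comp_snd hG hG0 hfi.integral_prod_right,
    lintegral_ofReal_mul_prod (hF.div_const m) hG (fun x => div_nonneg (hF0 x) hm0) hG0
      (hfi.integral_prod_left.div_const m) hfi.integral_prod_right,
    integral_div, hFm, hGm, div_mul_cancel_of_imp id, lintegral_const, measure_univ, mul_one,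
    hR₁, hR₂] at key
  refine ENNReal.le_of_add_le_add_right (a := ENNReal.ofReal m + ENNReal.ofReal m) (by simp) ?_
  calc _ = lentropy (μ.prod ν) f + ENNReal.ofReal m + ENNReal.ofReal m := (add_assoc ..).symm
    _ ≤ _ := key
    _ = _ := by ring

end Prod

lemma lentropy_const {Ω : Type*} [MeasurableSpace Ω] (μ : Measure Ω) [IsProbabilityMeasure μ]
    (c : ℝ) : lentropy μ (fun _ => c) = 0 := by
  simp [lentropy]

lemma lentropy_comp_measurableEquiv {X Y : Type*} [MeasurableSpace X] [MeasurableSpace Y]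
    {μ : Measure X} {ν : Measure Y} (e : X ≃ᵐ Y) (he : MeasurePreserving e μ ν) (g : Y → ℝ) :
    lentropy μ (fun x => g (e x)) = lentropy ν g := by
  rw [lentropy, lentropy, he.integral_comp' g]
  exact he.lintegral_comp_emb e.measurableEmbedding
    (fun y => ENNReal.ofReal (entDensity (∫ z, g z ∂ν) (g y)))

lemma Measurable.lentropy_prod_right {X B : Type*} [MeasurableSpace X] [MeasurableSpace B]
    {ν : Measure B} [SFinite ν] {g : X × B → ℝ} (hg : Measurable g) :
    Measurable fun x => lentropy ν (fun y => g (x, y)) := by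
  have hM : Measurable fun x => ∫ y, g (x, y) ∂ν :=
    hg.stronglyMeasurable.integral_prod_right'.measurable
  exact ((hM.comp measurable_fst).entDensity hg).ennreal_ofReal.lintegral_prod_right'

theorem lentropy_pi_le {n : ℕ} {Ω : Fin n → Type*} [∀ i, MeasurableSpace (Ω i)]
    (μ : ∀ i, Measure (Ω i)) [∀ i, IsProbabilityMeasure (μ i)] {f : (∀ i, Ω i) → ℝ}
    (hf : Measurable f) (hf0 : ∀ x, 0 ≤ f x) (hfi : Integrable f (Measure.pi μ)) :
    lentropy (Measure.pi μ) f
      ≤ ∑ i, ∫⁻ x, lentropy (μ i) (fun y => f (Function.update x i y)) ∂(Measure.pi μ) := by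
  induction n with
  | zero =>
    have hconst : f = fun _ => f default := funext fun x => congrArg f (Subsingleton.elim x _)
    rw [hconst, lentropy_const]
    exact zero_le
  | succ n ih =>
    set ν := Measure.pi fun j : Fin n => μ j.succ
    let e : Ω 0 × (∀ j : Fin n, Ω j.succ) ≃ᵐ (∀ i, Ω i) := (MeasurableEquiv.piFinSuccAbove Ω 0).symm
    have he : MeasurePreserving e ((μ 0).prod ν) (Measure.pi μ) :=
      (measurePreserving_piFinSuccAbove μ 0).symm
    have he_apply : ∀ a z, e (a, z) = Fin.cons a z := fun a z => Fin.insertNth_zero a z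
    set K : ∀ i, (∀ i, Ω i) → ℝ≥0∞ := fun i x => lentropy (μ i) (fun y => f (Function.update x i y))
    have hK : ∀ i, Measurable (K i) := fun i => (hf.comp measurable_update').lentropy_prod_right
    have hKe : ∀ i, Measurable fun q => K i (e q) := fun i => (hK i).comp e.measurable
    have hg : Measurable fun q => f (e q) := hf.comp e.measurable
    have hgi : Integrable (fun q => f (e q)) ((μ 0).prod ν) :=
      (he.integrable_comp_emb e.measurableEmbedding).2 hfi
    have hfirst : ∫⁻ z, lentropy (μ 0) (fun a => f (e (a, z))) ∂ν = ∫⁻ x, K 0 x ∂Measure.pi μ := by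
      rw [← he.lintegral_comp_emb e.measurableEmbedding,
        lintegral_prod_symm _ (hKe 0).aemeasurable]
      simp [K, he_apply, Fin.update_cons_zero]
    have hrest : ∫⁻ a, ∑ j : Fin n, ∫⁻ z, K j.succ (e (a, z)) ∂ν ∂μ 0
        = ∑ j : Fin n, ∫⁻ x, K j.succ x ∂Measure.pi μ := by
      rw [lintegral_finsetSum _ fun j _ => (hKe _).lintegral_prod_right']
      refine Finset.sum_congr rfl fun j _ => ?_
      rw [← lintegral_prod _ (hKe _).aemeasurable,
        he.lintegral_comp_emb e.measurableEmbedding]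
    calc lentropy (Measure.pi μ) f = lentropy ((μ 0).prod ν) (fun q => f (e q)) :=
          (lentropy_comp_measurableEquiv e he f).symm
      _ ≤ ∫⁻ z, lentropy (μ 0) (fun a => f (e (a, z))) ∂ν
            + ∫⁻ a, lentropy ν (fun z => f (e (a, z))) ∂μ 0 :=
          lentropy_prod_le hg (fun _ => hf0 _) hgi
      _ ≤ ∫⁻ x, K 0 x ∂Measure.pi μ + ∫⁻ a, ∑ j : Fin n, ∫⁻ z, K j.succ (e (a, z)) ∂ν ∂μ 0 := by
          rw [hfirst]
          refine add_le_add_right (lintegral_mono_ae ?_) _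
          filter_upwards [hgi.prod_right_ae] with a ha
          have hslice := ih (fun j => μ j.succ) (f := fun z => f (e (a, z)))
            (hg.comp measurable_prodMk_left) (fun _ => hf0 _) ha
          simp only [he_apply, Fin.cons_update] at hslice ⊢
          exact hslice
      _ = ∑ i, ∫⁻ x, K i x ∂Measure.pi μ := by rw [hrest, Fin.sum_univ_succ]

lemma le_coe_erealToENNReal (x : EReal) : x ≤ ((erealToENNReal x : ℝ≥0∞) : EReal) := by
  induction x using EReal.rec with
  | bot => exact bot_le
  | coe r => simp [erealToENNReal]
  | top => simp [erealToENNReal]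

/-- Tensorization (sub-additivity) of entropy: for a product probability measure
`P = μ_1 ⊗ ⋯ ⊗ μ_n` and a non-negative `f ∈ L¹(P)`,
`Ent_P(f) ≤ Σ_{i=1}^n ∫_X Ent_{μ_i}(f_i) dP`, where `f_i` is `f` as a function of the
`i`-th coordinate, the other coordinates being fixed. -/
theorem entropy_tensorization {n : ℕ} {Ω : Fin n → Type*} [∀ i, MeasurableSpace (Ω i)]
    (μ : ∀ i, Measure (Ω i)) [∀ i, IsProbabilityMeasure (μ i)]
    (f : (∀ i, Ω i) → ℝ) (hf : Measurable f) (hf0 : ∀ x, 0 ≤ f x)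
    (hfi : Integrable f (Measure.pi μ)) :
    entropy (Measure.pi μ) f ≤
      ((∑ i, ∫⁻ x, erealToENNReal (entropy (μ i) (fun y => f (Function.update x i y)))
          ∂(Measure.pi μ) : ℝ≥0∞) : EReal) := by
  have hslices : ∀ i x, erealToENNReal (entropy (μ i) (fun y => f (Function.update x i y)))
      = lentropy (μ i) (fun y => f (Function.update x i y)) := fun i x =>
    erealToENNReal_entropy (hf.comp (measurable_update x)) fun _ => hf0 _
  simp_rw [hslices]
  calc entropy (Measure.pi μ) f ≤ ((erealToENNReal (entropy (Measure.pi μ) f) : ℝ≥0∞) : EReal) :=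
        le_coe_erealToENNReal _
    _ = ((lentropy (Measure.pi μ) f : ℝ≥0∞) : EReal) := by rw [erealToENNReal_entropy hf hf0]
    _ ≤ _ := EReal.coe_ennreal_le_coe_ennreal_iff.mpr (lentropy_pi_le μ hf hf0 hfi)
end

section
/- (Efron–Stein inequality.) Let (Ω_i, Σ_i, μ_i), i = 1, …, n, be probability spaces and let P = μ_1 ⊗ ⋯ ⊗ μ_n be the product probability measure on X = Ω_1 × ⋯ × Ω_n. For every function f on X in L²(P), Var_P(f) ≤ Σ_{i=1}^n ∫_X Var_{μ_i}(f_i) dP, where f_i denotes f viewed as a function of the i-th coordinate with the other coordinates fixed. -/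
/-!
Tensorization of the variance. For a function `F` of two independent coordinates, the law of
total variance gives `Var F = E_b Var_a F + Var_b (E_a F)`, and Jensen's inequality applied to
`E_a F(·, b) - E F = E_a (F(a, b) - E_b F(a, ·))` bounds the last term by `E_a Var_b F`.
Efron–Stein follows by induction on `n`, splitting off the first coordinate and applying the
induction hypothesis to the sections `F(c, ·)`.
-/

open MeasureTheory ProbabilityTheory
open scoped ENNReal

namespace ProbabilityTheory

section OneFactor

variable {Y : Type*} [MeasurableSpace Y] {μ : Measure Y} [IsProbabilityMeasure μ]

theorem enorm_integral_sq_le_lintegral {E : Type*} [NormedAddCommGroup E] [NormedSpace ℝ E]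
    {u : Y → E} (hu : AEStronglyMeasurable u μ) :
    ‖∫ y, u y ∂μ‖ₑ ^ 2 ≤ ∫⁻ y, ‖u y‖ₑ ^ 2 ∂μ :=
  calc ‖∫ y, u y ∂μ‖ₑ ^ 2 ≤ eLpNorm u 1 μ ^ 2 := by
        rw [eLpNorm_one_eq_lintegral_enorm]
        gcongr
        exact enorm_integral_le_lintegral_enorm u
    _ ≤ eLpNorm u 2 μ ^ 2 := by gcongr; exact eLpNorm_le_eLpNorm_of_exponent_le one_le_two hu
    _ = ∫⁻ y, ‖u y‖ₑ ^ 2 ∂μ := by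
        simpa using eLpNorm_nnreal_pow_eq_lintegral (f := u) (μ := μ) (p := 2) two_ne_zero

theorem evariance_eq_ofReal_integral_sq_sub {g : Y → ℝ} (hg : MemLp g 2 μ) :
    evariance g μ = ENNReal.ofReal (∫ y, g y ^ 2 ∂μ - (∫ y, g y ∂μ) ^ 2) := by
  rw [← ofReal_variance hg, variance_eq_sub hg]
  rfl

theorem lintegral_enorm_sub_sq_eq_evariance_add {g : Y → ℝ} (hg : MemLp g 2 μ) (t : ℝ) :
    ∫⁻ y, ‖g y - t‖ₑ ^ 2 ∂μ = evariance g μ + ‖μ[g] - t‖ₑ ^ 2 := by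
  have hgt : MemLp (fun y => g y - t) 2 μ := hg.sub (memLp_const t)
  have hsplit : ∫ y, (g y - t) ^ 2 ∂μ = variance g μ + (μ[g] - t) ^ 2 := by
    have h := variance_eq_sub hgt
    rw [variance_sub_const hg.aestronglyMeasurable,
      integral_sub (hg.integrable one_le_two) (integrable_const t)] at h
    simp only [Pi.pow_apply, integral_const, probReal_univ, one_smul] at h
    linarith
  rw [← ofReal_variance hg, Real.enorm_eq_ofReal_abs, ← ENNReal.ofReal_pow (abs_nonneg _), sq_abs,
    ← ENNReal.ofReal_add (variance_nonneg g μ) (sq_nonneg _), ← hsplit,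
    ofReal_integral_eq_lintegral_ofReal hgt.integrable_sq (ae_of_all _ fun y => sq_nonneg _)]
  simp only [Real.enorm_eq_ofReal_abs, ← ENNReal.ofReal_pow (abs_nonneg _), sq_abs]

end OneFactor

section TwoFactors

variable {A B : Type*} [MeasurableSpace A] [MeasurableSpace B] {α : Measure A} {β : Measure B}
  {F : A × B → ℝ}

theorem ae_memLp_two_prod_left [SFinite α] [SFinite β] (hF : Measurable F)
    (hFi : MemLp F 2 (α.prod β)) : ∀ᵐ b ∂β, MemLp (fun a => F (a, b)) 2 α := by
  filter_upwards [hFi.integrable_sq.prod_left_ae] with b hb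
  exact (memLp_two_iff_integrable_sq (hF.comp measurable_prodMk_right).aestronglyMeasurable).2 hb

theorem ae_memLp_two_prod_right [SFinite α] [SFinite β] (hF : Measurable F)
    (hFi : MemLp F 2 (α.prod β)) : ∀ᵐ a ∂α, MemLp (fun b => F (a, b)) 2 β := by
  filter_upwards [hFi.integrable_sq.prod_right_ae] with a ha
  exact (memLp_two_iff_integrable_sq (hF.comp measurable_prodMk_left).aestronglyMeasurable).2 ha

theorem _root_.Measurable.evariance_prod_right [SFinite β] (hF : Measurable F) :
    Measurable fun a => evariance (fun b => F (a, b)) β := by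
  have hmean : Measurable fun a => ∫ b, F (a, b) ∂β :=
    hF.stronglyMeasurable.integral_prod_right'.measurable
  exact ((hF.sub (hmean.comp measurable_fst)).enorm.pow_const 2).lintegral_prod_right'

theorem evariance_prod_eq_lintegral_add [IsProbabilityMeasure α] [IsFiniteMeasure β]
    (hF : Measurable F) (hFi : MemLp F 2 (α.prod β)) :
    evariance F (α.prod β) = ∫⁻ b, evariance (fun a => F (a, b)) α ∂β
      + evariance (fun b => ∫ a, F (a, b) ∂α) β := by
  have hmean : ∫ p, F p ∂(α.prod β) = ∫ b, ∫ a, F (a, b) ∂α ∂β :=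
    integral_prod_symm F (hFi.integrable one_le_two)
  have hg : Measurable fun b => ∫ a, F (a, b) ∂α :=
    hF.stronglyMeasurable.integral_prod_left'.measurable
  calc evariance F (α.prod β)
      = ∫⁻ b, ∫⁻ a, ‖F (a, b) - ∫ p, F p ∂(α.prod β)‖ₑ ^ 2 ∂α ∂β :=
        lintegral_prod_symm' _ (by fun_prop)
    _ = ∫⁻ b, (evariance (fun a => F (a, b)) α
          + ‖∫ a, F (a, b) ∂α - ∫ p, F p ∂(α.prod β)‖ₑ ^ 2) ∂β := by
        refine lintegral_congr_ae ?_
        filter_upwards [ae_memLp_two_prod_left hF hFi] with b hb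
        exact lintegral_enorm_sub_sq_eq_evariance_add hb _
    _ = _ := by
        rw [lintegral_add_right _ (by fun_prop), hmean]
        rfl

theorem evariance_integral_le_lintegral [IsProbabilityMeasure α] [SFinite β]
    (hF : Measurable F) (hFi : Integrable F (α.prod β)) :
    evariance (fun b => ∫ a, F (a, b) ∂α) β ≤ ∫⁻ a, evariance (fun b => F (a, b)) β ∂α := by
  set h : A → ℝ := fun a => ∫ b, F (a, b) ∂β
  have hh : Measurable h := hF.stronglyMeasurable.integral_prod_right'.measurable
  have hmean : ∫ b, ∫ a, F (a, b) ∂α ∂β = ∫ a, h a ∂α := by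
    rw [← integral_prod_symm F hFi, integral_prod F hFi]
  calc evariance (fun b => ∫ a, F (a, b) ∂α) β
      = ∫⁻ b, ‖∫ a, (F (a, b) - h a) ∂α‖ₑ ^ 2 ∂β := by
        refine lintegral_congr_ae ?_
        filter_upwards [hFi.prod_left_ae] with b hb
        rw [integral_sub hb hFi.integral_prod_left, hmean]
    _ ≤ ∫⁻ b, ∫⁻ a, ‖F (a, b) - h a‖ₑ ^ 2 ∂α ∂β :=
        lintegral_mono fun b => enorm_integral_sq_le_lintegral (by fun_prop)
    _ = ∫⁻ a, ∫⁻ b, ‖F (a, b) - h a‖ₑ ^ 2 ∂β ∂α :=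
        lintegral_lintegral_swap (by fun_prop)

theorem evariance_prod_le [IsProbabilityMeasure α] [IsFiniteMeasure β] (hF : Measurable F)
    (hFi : MemLp F 2 (α.prod β)) :
    evariance F (α.prod β) ≤ ∫⁻ b, evariance (fun a => F (a, b)) α ∂β
      + ∫⁻ a, evariance (fun b => F (a, b)) β ∂α := by
  rw [evariance_prod_eq_lintegral_add hF hFi]
  gcongr
  exact evariance_integral_le_lintegral hF (hFi.integrable one_le_two)

end TwoFactors

theorem _root_.MeasureTheory.MeasurePreserving.evariance_comp {X Y : Type*} [MeasurableSpace X]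
    [MeasurableSpace Y] {μ : Measure X} {ν : Measure Y} {e : X → Y} (he : MeasurePreserving e μ ν)
    (he' : MeasurableEmbedding e) (g : Y → ℝ) : evariance (g ∘ e) μ = evariance g ν := by
  simp only [evariance, Function.comp_apply, he.integral_comp he' g]
  exact he.lintegral_comp_emb he' fun y => ‖g y - ∫ y', g y' ∂ν‖ₑ ^ 2

section Pi

variable {ι : Type*} [Fintype ι] [DecidableEq ι] {Ω : ι → Type*} [∀ i, MeasurableSpace (Ω i)]
  (μ : ∀ i, Measure (Ω i)) [∀ i, IsProbabilityMeasure (μ i)]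

theorem lintegral_lintegral_update {g : (∀ i, Ω i) → ℝ≥0∞} (hg : Measurable g) (i : ι) :
    ∫⁻ x, ∫⁻ y, g (Function.update x i y) ∂μ i ∂Measure.pi μ = ∫⁻ x, g x ∂Measure.pi μ := by
  refine lintegral_eq_of_lmarginal_eq {i} ?_ hg ?_
  · exact (hg.comp measurable_update').lintegral_prod_right'
  ext x
  simp [lmarginal_singleton, lintegral_const]

theorem ae_memLp_two_update {f : (∀ i, Ω i) → ℝ} (hf : Measurable f)
    (hfi : MemLp f 2 (Measure.pi μ)) (i : ι) :
    ∀ᵐ x ∂Measure.pi μ, MemLp (fun y => f (Function.update x i y)) 2 (μ i) := by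
  have hg : Measurable fun x => ‖f x‖ₑ ^ 2 := hf.enorm.pow_const 2
  have hfin : ∫⁻ x, ∫⁻ y, ‖f (Function.update x i y)‖ₑ ^ 2 ∂μ i ∂Measure.pi μ ≠ ∞ := by
    rw [lintegral_lintegral_update μ hg]
    simpa [enorm_pow] using hfi.integrable_sq.2.ne
  filter_upwards [ae_lt_top (hg.comp measurable_update').lintegral_prod_right' hfin] with x hx
  have hfx : Measurable fun y => f (Function.update x i y) := hf.comp (measurable_update x)
  refine (memLp_two_iff_integrable_sq hfx.aestronglyMeasurable).2
    ⟨(hfx.pow_const 2).aestronglyMeasurable, ?_⟩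
  simpa [HasFiniteIntegral, enorm_pow] using hx

end Pi

section FinSuccAbove

variable {n : ℕ} {Ω : Fin (n + 1) → Type*} [∀ i, MeasurableSpace (Ω i)]
  (μ : ∀ i, Measure (Ω i)) [∀ i, IsProbabilityMeasure (μ i)] {f : (∀ i, Ω i) → ℝ}

theorem lintegral_evariance_update_eq (hf : Measurable f) (p : Fin (n + 1)) :
    ∫⁻ x, evariance (fun y => f (Function.update x p y)) (μ p) ∂Measure.pi μ =
      ∫⁻ z, evariance (fun y => f (p.insertNth y z)) (μ p)
        ∂Measure.pi fun j => μ (p.succAbove j) := by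
  rw [← (measurePreserving_piFinSuccAbove μ p).symm.lintegral_comp_emb
    (MeasurableEquiv.measurableEmbedding _)]
  simp only [MeasurableEquiv.piFinSuccAbove_symm_apply, Fin.insertNthEquiv, Equiv.coe_fn_mk,
    Fin.update_insertNth]
  exact (measurePreserving_snd (μ := μ p)
    (ν := Measure.pi fun j => μ (p.succAbove j))).lintegral_comp
    (Measurable.evariance_prod_right (β := μ p) (hf.comp
      ((MeasurableEquiv.piFinSuccAbove Ω p).symm.measurable.comp measurable_swap)))

theorem lintegral_sum_evariance_update_succAbove_eq (hf : Measurable f) (p : Fin (n + 1)) :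
    ∑ j, ∫⁻ x, evariance (fun y => f (Function.update x (p.succAbove j) y)) (μ (p.succAbove j))
        ∂Measure.pi μ =
      ∫⁻ c, ∑ j, ∫⁻ z, evariance (fun y => f (p.insertNth c (Function.update z j y)))
        (μ (p.succAbove j)) ∂(Measure.pi fun j => μ (p.succAbove j)) ∂μ p := by
  have hmeas : ∀ j, Measurable fun q : Ω p × (∀ j, Ω (p.succAbove j)) =>
      evariance (fun y => f (p.insertNth q.1 (Function.update q.2 j y))) (μ (p.succAbove j)) :=
    fun j => Measurable.evariance_prod_right (hf.comp
      ((MeasurableEquiv.piFinSuccAbove Ω p).symm.measurable.comp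
        (measurable_fst.fst.prodMk
          (measurable_update'.comp (measurable_fst.snd.prodMk measurable_snd)))))
  rw [lintegral_finsetSum _ fun j _ => (hmeas j).lintegral_prod_right']
  refine Finset.sum_congr rfl fun j _ => ?_
  rw [← (measurePreserving_piFinSuccAbove μ p).symm.lintegral_comp_emb
    (MeasurableEquiv.measurableEmbedding _)]
  simp only [MeasurableEquiv.piFinSuccAbove_symm_apply, Fin.insertNthEquiv, Equiv.coe_fn_mk,
    ← Fin.insertNth_update]
  exact lintegral_prod _ (hmeas j).aemeasurable

end FinSuccAbove

theorem evariance_pi_le {n : ℕ} {Ω : Fin n → Type*} [∀ i, MeasurableSpace (Ω i)]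
    (μ : ∀ i, Measure (Ω i)) [∀ i, IsProbabilityMeasure (μ i)] {f : (∀ i, Ω i) → ℝ}
    (hf : Measurable f) (hfi : MemLp f 2 (Measure.pi μ)) :
    evariance f (Measure.pi μ) ≤
      ∑ i, ∫⁻ x, evariance (fun y => f (Function.update x i y)) (μ i) ∂Measure.pi μ := by
  induction n with
  | zero =>
    have hconst : f = fun _ => f isEmptyElim := funext fun x => congrArg f (Subsingleton.elim _ _)
    rw [hconst]
    simp [evariance]
  | succ n ih =>
    set β := Measure.pi fun j => μ ((0 : Fin (n + 1)).succAbove j)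
    set F : Ω 0 × (∀ j, Ω (Fin.succAbove 0 j)) → ℝ := fun q => f (Fin.insertNth 0 q.1 q.2)
    have he := (measurePreserving_piFinSuccAbove μ 0).symm
    have hF : Measurable F := hf.comp (MeasurableEquiv.piFinSuccAbove Ω 0).symm.measurable
    have hFi : MemLp F 2 ((μ 0).prod β) := hfi.comp_measurePreserving he
    calc evariance f (Measure.pi μ) = evariance F ((μ 0).prod β) :=
          (he.evariance_comp (MeasurableEquiv.measurableEmbedding _) f).symm
      _ ≤ ∫⁻ z, evariance (fun c => F (c, z)) (μ 0) ∂β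
          + ∫⁻ c, evariance (fun z => F (c, z)) β ∂μ 0 := evariance_prod_le hF hFi
      _ ≤ ∫⁻ z, evariance (fun c => F (c, z)) (μ 0) ∂β
          + ∫⁻ c, ∑ j, ∫⁻ z, evariance (fun y => F (c, Function.update z j y))
              (μ (Fin.succAbove 0 j)) ∂β ∂μ 0 := by
        gcongr 1
        refine lintegral_mono_ae ?_
        filter_upwards [ae_memLp_two_prod_right hF hFi] with c hc
        exact ih _ (hF.comp measurable_prodMk_left) hc
      _ = _ := by
        rw [Fin.sum_univ_succAbove _ 0, lintegral_evariance_update_eq μ hf,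
          lintegral_sum_evariance_update_succAbove_eq μ hf]

end ProbabilityTheory

/-- Efron–Stein inequality: for a product probability measure `P = μ_1 ⊗ ⋯ ⊗ μ_n` and
`f ∈ L²(P)`, `Var_P(f) ≤ Σ_{i=1}^n ∫_X Var_{μ_i}(f_i) dP`, where `f_i` is `f` as a function
of the `i`-th coordinate, the other coordinates being fixed, and
`Var_μ(g) = ∫ g² dμ − (∫ g dμ)²`. -/
theorem efron_stein {n : ℕ} {Ω : Fin n → Type*} [∀ i, MeasurableSpace (Ω i)]
    (μ : ∀ i, Measure (Ω i)) [∀ i, IsProbabilityMeasure (μ i)]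
    (f : (∀ i, Ω i) → ℝ) (hf : Measurable f) (hfi : MemLp f 2 (Measure.pi μ)) :
    ENNReal.ofReal ((∫ x, (f x) ^ 2 ∂(Measure.pi μ)) - (∫ x, f x ∂(Measure.pi μ)) ^ 2) ≤
      ∑ i, ∫⁻ x, ENNReal.ofReal ((∫ y, (f (Function.update x i y)) ^ 2 ∂(μ i)) -
        (∫ y, f (Function.update x i y) ∂(μ i)) ^ 2) ∂(Measure.pi μ) := by
  rw [← evariance_eq_ofReal_integral_sq_sub hfi]
  refine (evariance_pi_le μ hf hfi).trans (Finset.sum_le_sum fun i _ => lintegral_mono_ae ?_)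
  filter_upwards [ae_memLp_two_update μ hf hfi i] with x hx
  rw [evariance_eq_ofReal_integral_sq_sub hx]
end

section
/- (Sup-of-weighted-Hamming description of the convex distance.) Let X = Ω_1 × ⋯ × Ω_n be a product of sets, let A ⊆ X be non-empty and let x ∈ X. Let U_A(x) = { (1_{x_1 ≠ y_1}, …, 1_{x_n ≠ y_n}) ∈ ℝ^n : y ∈ A }, let V_A(x) be the convex hull of U_A(x) in ℝ^n and let d_A(x) be the Euclidean distance from 0 to V_A(x). For a ∈ [0, ∞)^n define d_a(x, A) = inf_{y ∈ A} Σ_{i=1}^n a_i 1_{x_i ≠ y_i}. Then d_A(x) = sup { d_a(x, A) : a ∈ [0, ∞)^n, |a| = 1 }, where |a| is the Euclidean norm of a. -/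
open scoped Classical RealInnerProductSpace

/-!
Let `p` be the point of `V_A(x)` nearest to the origin, so `d_A(x) = ‖p‖`. For a unit vector `a`,
`⟪a, v⟫ ≤ ‖v‖` bounds the infimum of `⟪a, ·⟫` over `V_A(x)` by `‖p‖`; for `a = p / ‖p‖` the
projection inequality `‖p‖² ≤ ⟪p, v⟫` shows that this infimum is `‖p‖`, and `a ≥ 0` because
`V_A(x)` lies in the non-negative orthant. The infimum of a linear functional over a convex hull
is its infimum over the generating points, which on the indicator vectors is `d_a(x, A)`.
-/

/-- Talagrand's convex distance: the Euclidean distance in `ℝ^n` from the origin to the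
convex hull of the set of indicator vectors `{ (1_{x_i ≠ y_i})_{1 ≤ i ≤ n} : y ∈ A }`. -/
noncomputable def convexDist {n : ℕ} {Ω : Fin n → Type*}
    (A : Set (∀ i, Ω i)) (x : ∀ i, Ω i) : ℝ :=
  Metric.infDist 0 (convexHull ℝ
    {s : EuclideanSpace ℝ (Fin n) | ∃ y ∈ A, ∀ i, s i = if x i ≠ y i then 1 else 0})

section InnerProductSpace

variable {E : Type*} [NormedAddCommGroup E] [InnerProductSpace ℝ E]

theorem le_inner_of_mem_convexHull {s : Set E} {a v : E} {c : ℝ}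
    (h : ∀ u ∈ s, c ≤ ⟪a, u⟫) (hv : v ∈ convexHull ℝ s) : c ≤ ⟪a, v⟫ :=
  convexHull_min h (convex_halfSpace_ge (innerₛₗ ℝ a).isLinear c) hv

theorem le_infDist_zero_of_le_inner {K : Set E} (hK : K.Nonempty) {a : E} (ha : ‖a‖ ≤ 1)
    {c : ℝ} (h : ∀ v ∈ K, c ≤ ⟪a, v⟫) : c ≤ Metric.infDist 0 K := by
  refine (Metric.le_infDist hK).2 fun v hv => ?_
  calc c ≤ ⟪a, v⟫ := h v hv
    _ ≤ ‖a‖ * ‖v‖ := real_inner_le_norm a v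
    _ ≤ ‖v‖ := mul_le_of_le_one_left (norm_nonneg v) ha
    _ = dist 0 v := (dist_zero_left v).symm

theorem exists_mem_norm_eq_infDist_zero_and_norm_sq_le_inner {K : Set E} (hne : K.Nonempty)
    (hcomplete : IsComplete K) (hconv : Convex ℝ K) :
    ∃ p ∈ K, ‖p‖ = Metric.infDist 0 K ∧ ∀ v ∈ K, ‖p‖ ^ 2 ≤ ⟪p, v⟫ := by
  obtain ⟨p, hpK, hp⟩ := exists_norm_eq_iInf_of_complete_convex hne hcomplete hconv 0
  refine ⟨p, hpK, ?_, fun v hv => ?_⟩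
  · simpa [Metric.infDist_eq_iInf, dist_eq_norm] using hp
  · have := (norm_eq_iInf_iff_real_inner_le_zero hconv hpK).1 hp v hv
    rw [zero_sub, inner_neg_left, inner_sub_right, real_inner_self_eq_norm_sq] at this
    linarith

end InnerProductSpace

section Euclidean

variable {ι : Type*} [Fintype ι]

theorem EuclideanSpace.norm_toLp_eq_one_iff (a : ι → ℝ) :
    ‖WithLp.toLp 2 a‖ = 1 ↔ ∑ i, a i ^ 2 = 1 := by
  rw [← pow_eq_one_iff_of_nonneg (norm_nonneg _) two_ne_zero, EuclideanSpace.norm_sq_eq]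
  simp only [Real.norm_eq_abs, sq_abs]

theorem exists_nonneg_sum_sq_eq_one_infDist_zero_le_inner {V : Set (EuclideanSpace ℝ ι)}
    (hne : V.Nonempty) (hcomplete : IsComplete V) (hconv : Convex ℝ V)
    (hnonneg : ∀ v ∈ V, ∀ i, 0 ≤ v i) (h0 : 0 ∉ V) :
    ∃ a : ι → ℝ, (∀ i, 0 ≤ a i) ∧ ∑ i, a i ^ 2 = 1 ∧
      ∀ v ∈ V, Metric.infDist 0 V ≤ ⟪WithLp.toLp 2 a, v⟫ := by
  obtain ⟨p, hpV, hp, hpv⟩ :=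
    exists_mem_norm_eq_infDist_zero_and_norm_sq_le_inner hne hcomplete hconv
  have hp0 : p ≠ 0 := ne_of_mem_of_not_mem hpV h0
  have hpos : 0 < ‖p‖ := norm_pos_iff.2 hp0
  refine ⟨(‖p‖⁻¹ • p).ofLp, fun i => ?_, ?_, fun v hv => ?_⟩
  · simpa using mul_nonneg (inv_nonneg.2 hpos.le) (hnonneg p hpV i)
  · rw [← EuclideanSpace.norm_toLp_eq_one_iff, WithLp.toLp_ofLp]
    exact norm_smul_inv_norm hp0
  · calc Metric.infDist 0 V = ‖p‖⁻¹ * ‖p‖ ^ 2 := by rw [← hp]; field_simp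
      _ ≤ ‖p‖⁻¹ * ⟪p, v⟫ := by gcongr; exact hpv v hv
      _ = ⟪WithLp.toLp 2 (‖p‖⁻¹ • p).ofLp, v⟫ := by
        rw [WithLp.toLp_ofLp, real_inner_smul_left]

end Euclidean

section Hamming

variable {ι : Type*} {Ω : ι → Type*}

noncomputable def mismatchVec (x y : ∀ i, Ω i) : EuclideanSpace ℝ ι :=
  WithLp.toLp 2 fun i => if x i ≠ y i then 1 else 0

theorem nonneg_of_mem_convexHull_image_mismatchVec {x : ∀ i, Ω i} {A : Set (∀ i, Ω i)}
    {v : EuclideanSpace ℝ ι} (hv : v ∈ convexHull ℝ (mismatchVec x '' A)) (i : ι) : 0 ≤ v i := by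
  refine convexHull_min ?_ (convex_halfSpace_ge (f := fun v : EuclideanSpace ℝ ι => v i)
    ⟨fun _ _ => rfl, fun _ _ => rfl⟩ 0) hv
  rintro _ ⟨y, -, rfl⟩
  simp only [mismatchVec, Set.mem_ofPred_eq]
  split_ifs <;> norm_num

variable [Fintype ι]

noncomputable def weightedHammingDist (a : ι → ℝ) (x : ∀ i, Ω i) (A : Set (∀ i, Ω i)) : ℝ :=
  sInf {s | ∃ y ∈ A, s = ∑ i, a i * if x i ≠ y i then 1 else 0}

theorem finite_range_mismatchVec (x : ∀ i, Ω i) : (Set.range (mismatchVec x)).Finite := by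
  refine (Set.finite_range fun s : Finset ι =>
    (WithLp.toLp 2 fun i => if i ∈ s then 1 else 0 : EuclideanSpace ℝ ι)).subset ?_
  rintro _ ⟨y, rfl⟩
  exact ⟨Finset.univ.filter fun i => x i ≠ y i, by simp [mismatchVec]⟩

theorem inner_toLp_mismatchVec (a : ι → ℝ) (x y : ∀ i, Ω i) :
    ⟪WithLp.toLp 2 a, mismatchVec x y⟫ = ∑ i, a i * if x i ≠ y i then 1 else 0 := by
  simp [mismatchVec, PiLp.inner_apply, mul_comm]

theorem inner_toLp_mismatchVec_nonneg {a : ι → ℝ} (ha : ∀ i, 0 ≤ a i) (x y : ∀ i, Ω i) :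
    0 ≤ ⟪WithLp.toLp 2 a, mismatchVec x y⟫ := by
  rw [inner_toLp_mismatchVec]
  exact Finset.sum_nonneg fun i _ => mul_nonneg (ha i) (by split_ifs <;> norm_num)

theorem le_weightedHammingDist_iff {a : ι → ℝ} (ha : ∀ i, 0 ≤ a i) (x : ∀ i, Ω i)
    {A : Set (∀ i, Ω i)} (hA : A.Nonempty) {c : ℝ} :
    c ≤ weightedHammingDist a x A ↔ ∀ y ∈ A, c ≤ ⟪WithLp.toLp 2 a, mismatchVec x y⟫ := by
  have himage : {s | ∃ y ∈ A, s = ∑ i, a i * if x i ≠ y i then 1 else 0} =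
      (fun y => ⟪WithLp.toLp 2 a, mismatchVec x y⟫) '' A := by
    ext
    simp only [inner_toLp_mismatchVec, Set.mem_ofPred_eq, Set.mem_image, eq_comm]
  rw [weightedHammingDist, himage, le_csInf_iff _ (hA.image _), Set.forall_mem_image]
  exact ⟨0, Set.forall_mem_image.2 fun y _ => inner_toLp_mismatchVec_nonneg ha x y⟩

theorem weightedHammingDist_nonneg {a : ι → ℝ} (ha : ∀ i, 0 ≤ a i) (x : ∀ i, Ω i)
    {A : Set (∀ i, Ω i)} (hA : A.Nonempty) : 0 ≤ weightedHammingDist a x A :=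
  (le_weightedHammingDist_iff ha x hA).2 fun y _ => inner_toLp_mismatchVec_nonneg ha x y

theorem weightedHammingDist_le_infDist {a : ι → ℝ} (ha : ∀ i, 0 ≤ a i) (hnorm : ∑ i, a i ^ 2 = 1)
    (x : ∀ i, Ω i) {A : Set (∀ i, Ω i)} (hA : A.Nonempty) :
    weightedHammingDist a x A ≤ Metric.infDist 0 (convexHull ℝ (mismatchVec x '' A)) := by
  refine le_infDist_zero_of_le_inner (hA.image _).convexHull
    ((EuclideanSpace.norm_toLp_eq_one_iff a).2 hnorm).le
    fun v hv => le_inner_of_mem_convexHull ?_ hv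
  rintro _ ⟨y, hy, rfl⟩
  exact (le_weightedHammingDist_iff ha x hA).1 le_rfl y hy

theorem exists_infDist_le_weightedHammingDist (x : ∀ i, Ω i) {A : Set (∀ i, Ω i)}
    (hA : A.Nonempty) (h0 : 0 ∉ convexHull ℝ (mismatchVec x '' A)) :
    ∃ a : ι → ℝ, (∀ i, 0 ≤ a i) ∧ ∑ i, a i ^ 2 = 1 ∧
      Metric.infDist 0 (convexHull ℝ (mismatchVec x '' A)) ≤ weightedHammingDist a x A := by
  have hcompact : IsCompact (convexHull ℝ (mismatchVec x '' A)) :=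
    ((finite_range_mismatchVec x).subset (Set.image_subset_range _ _)).isCompact_convexHull ℝ
  obtain ⟨a, ha, hnorm, hle⟩ := exists_nonneg_sum_sq_eq_one_infDist_zero_le_inner
    (hA.image _).convexHull hcompact.isComplete (convex_convexHull ℝ _)
    (fun v hv => nonneg_of_mem_convexHull_image_mismatchVec hv) h0
  exact ⟨a, ha, hnorm, (le_weightedHammingDist_iff ha x hA).2 fun y hy =>
    hle _ (subset_convexHull ℝ _ ⟨y, hy, rfl⟩)⟩

end Hamming

theorem convexDist_eq_infDist_convexHull_image_mismatchVec {n : ℕ} {Ω : Fin n → Type*}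
    (A : Set (∀ i, Ω i)) (x : ∀ i, Ω i) :
    convexDist A x = Metric.infDist 0 (convexHull ℝ (mismatchVec x '' A)) := by
  rw [convexDist]
  congr
  ext s
  refine exists_congr fun y => and_congr_right fun _ => ?_
  rw [eq_comm, mismatchVec, ← (WithLp.ofLp_injective 2).eq_iff, WithLp.ofLp_toLp, funext_iff]

/-- The convex distance `d_A(x)` equals the supremum, over all weights `a ∈ [0, ∞)^n` with
Euclidean norm `1`, of the weighted Hamming distances
`d_a(x, A) = inf_{y ∈ A} Σ_i a_i 1_{x_i ≠ y_i}`. -/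
theorem convexDist_eq_sup_weighted_hamming {n : ℕ} {Ω : Fin n → Type*}
    (A : Set (∀ i, Ω i)) (hA : A.Nonempty) (x : ∀ i, Ω i) :
    convexDist A x =
      sSup {r : ℝ | ∃ a : Fin n → ℝ, (∀ i, 0 ≤ a i) ∧ (∑ i, (a i) ^ 2 = 1) ∧
        r = sInf {s : ℝ | ∃ y ∈ A, s = ∑ i, a i * (if x i ≠ y i then 1 else 0)}} := by
  rw [convexDist_eq_infDist_convexHull_image_mismatchVec]
  set T := {r | ∃ a, (∀ i, 0 ≤ a i) ∧ ∑ i, a i ^ 2 = 1 ∧ r = weightedHammingDist a x A}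
  show _ = sSup T
  have upper : ∀ r ∈ T, r ≤ Metric.infDist 0 (convexHull ℝ (mismatchVec x '' A)) := by
    rintro _ ⟨a, ha, hnorm, rfl⟩
    exact weightedHammingDist_le_infDist ha hnorm x hA
  refine le_antisymm ?_ (Real.sSup_le upper Metric.infDist_nonneg)
  by_cases h0 : 0 ∈ convexHull ℝ (mismatchVec x '' A)
  · rw [Metric.infDist_zero_of_mem h0]
    refine Real.sSup_nonneg ?_
    rintro _ ⟨a, ha, -, rfl⟩
    exact weightedHammingDist_nonneg ha x hA
  · obtain ⟨a, ha, hnorm, hle⟩ := exists_infDist_le_weightedHammingDist x hA h0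
    exact hle.trans (le_csSup ⟨_, upper⟩ ⟨a, ha, hnorm, rfl⟩)
end

section
/- Let X = Ω_1 × ⋯ × Ω_n be a product of sets, let A ⊆ X be non-empty, and for x ∈ X let d_A(x) be the Euclidean distance in ℝ^n from the origin to the convex hull of { (1_{x_i ≠ y_i})_{1 ≤ i ≤ n} : y ∈ A }. If x, y ∈ X differ in at most one coordinate (i.e., there is an index i with x_j = y_j for all j ≠ i), then d_A(x)² − d_A(y)² ≤ 1. -/
/-!
Forgetting the `i`-th coordinate maps the vertex sets of `x` and of `y`, and hence their convex
hulls, onto the same set. So every point `p` of the hull for `y` has a partner `q` in the hull for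
`x` that agrees with it off coordinate `i`, where `q i ∈ [0, 1]`; thus `‖q‖² ≤ ‖p‖² + 1`, and
passing to infima gives `d_A(x)² ≤ d_A(y)² + 1`.
-/

open scoped Classical

open Metric

theorem infDist_zero_sq_le_add {E : Type*} [SeminormedAddCommGroup E] {S T : Set E} {c : ℝ}
    (hT : T.Nonempty) (h : ∀ p ∈ T, ∃ q ∈ S, ‖q‖ ^ 2 ≤ ‖p‖ ^ 2 + c) :
    infDist 0 S ^ 2 ≤ infDist 0 T ^ 2 + c := by
  have hS : ∀ p ∈ T, infDist 0 S ^ 2 ≤ ‖p‖ ^ 2 + c := fun p hp => by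
    obtain ⟨q, hq, hqp⟩ := h p hp
    have : infDist 0 S ≤ ‖q‖ := by simpa using infDist_le_dist_of_mem (x := 0) hq
    nlinarith [infDist_nonneg (x := (0 : E)) (s := S)]
  rcases le_or_gt (infDist 0 S ^ 2) c with hc | hc
  · nlinarith
  have : √(infDist 0 S ^ 2 - c) ≤ infDist 0 T :=
    (le_infDist hT).2 fun p hp => by
      rw [dist_zero_left, Real.sqrt_le_left (norm_nonneg p)]
      linarith [hS p hp]
  nlinarith [Real.sq_sqrt (sub_nonneg.2 hc.le), Real.sqrt_nonneg (infDist 0 S ^ 2 - c)]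

theorem EuclideanSpace.norm_sq_le_add_sq_of_eqOn_compl {ι : Type*} [Fintype ι]
    {p q : EuclideanSpace ℝ ι} {i : ι} (h : ∀ j ≠ i, q j = p j) :
    ‖q‖ ^ 2 ≤ ‖p‖ ^ 2 + q i ^ 2 := by
  simp only [EuclideanSpace.real_norm_sq_eq, ← Finset.add_sum_erase _ _ (Finset.mem_univ i)]
  rw [Finset.sum_congr rfl fun j hj => by rw [h j (Finset.ne_of_mem_erase hj)]]
  nlinarith [sq_nonneg (p i)]

section Mismatch

variable {ι : Type*} {Ω : ι → Type*}

noncomputable def mismatchVector (x a : ∀ j, Ω j) : EuclideanSpace ℝ ι :=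
  WithLp.toLp 2 fun j => if x j ≠ a j then 1 else 0

theorem convexHull_mismatchVector_subset_Icc (A : Set (∀ j, Ω j)) (x : ∀ j, Ω j) (i : ι) :
    convexHull ℝ (mismatchVector x '' A) ⊆ {q | q i ∈ Set.Icc (0 : ℝ) 1} := by
  refine convexHull_min ?_ ((convex_Icc 0 1).linear_preimage (EuclideanSpace.proj i).toLinearMap)
  rintro _ ⟨a, -, rfl⟩
  by_cases h : x i = a i <;> simp [mismatchVector, h]

theorem exists_mem_convexHull_mismatchVector_eqOn_compl (A : Set (∀ j, Ω j))
    {x y : ∀ j, Ω j} {i : ι} (hxy : ∀ j ≠ i, x j = y j) {p : EuclideanSpace ℝ ι}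
    (hp : p ∈ convexHull ℝ (mismatchVector y '' A)) :
    ∃ q ∈ convexHull ℝ (mismatchVector x '' A), ∀ j ≠ i, q j = p j := by
  let forget : EuclideanSpace ℝ ι →ₗ[ℝ] ({j // j ≠ i} → ℝ) :=
    LinearMap.funLeft ℝ ℝ Subtype.val ∘ₗ (WithLp.linearEquiv 2 ℝ (ι → ℝ)).toLinearMap
  have himage : forget '' (mismatchVector x '' A) = forget '' (mismatchVector y '' A) := by
    simp only [Set.image_image]
    refine Set.image_congr fun a _ => funext fun j => ?_
    simp [forget, mismatchVector, LinearMap.funLeft_apply, hxy j j.2]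
  obtain ⟨q, hq, hqp⟩ : forget p ∈ forget '' convexHull ℝ (mismatchVector x '' A) := by
    rw [forget.image_convexHull, himage, ← forget.image_convexHull]
    exact Set.mem_image_of_mem forget hp
  exact ⟨q, hq, fun j hj => congrFun hqp ⟨j, hj⟩⟩

end Mismatch

theorem convexDist_eq_infDist_convexHull_mismatchVector {n : ℕ} {Ω : Fin n → Type*}
    (A : Set (∀ i, Ω i)) (x : ∀ i, Ω i) :
    convexDist A x = infDist 0 (convexHull ℝ (mismatchVector x '' A)) := by
  unfold convexDist
  congr 2
  ext s
  constructor
  · rintro ⟨a, ha, hs⟩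
    exact ⟨a, ha, by ext j; simp [mismatchVector, hs j]⟩
  · rintro ⟨a, ha, rfl⟩
    exact ⟨a, ha, fun j => rfl⟩

/-- If `x` and `y` differ in at most one coordinate, then `d_A(x)² − d_A(y)² ≤ 1`. -/
theorem convexDist_sq_sub_le_one {n : ℕ} {Ω : Fin n → Type*}
    (A : Set (∀ i, Ω i)) (hA : A.Nonempty) (x y : ∀ i, Ω i)
    (hxy : ∃ i, ∀ j, j ≠ i → x j = y j) :
    convexDist A x ^ 2 - convexDist A y ^ 2 ≤ 1 := by
  obtain ⟨i, hi⟩ := hxy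
  simp only [convexDist_eq_infDist_convexHull_mismatchVector, sub_le_iff_le_add']
  refine infDist_zero_sq_le_add ((hA.image _).mono (subset_convexHull ℝ _)) fun p hp => ?_
  obtain ⟨q, hq, hqp⟩ := exists_mem_convexHull_mismatchVector_eqOn_compl A hi hp
  have hqi : q i ^ 2 ≤ 1 := by
    obtain ⟨h0, h1⟩ := convexHull_mismatchVector_subset_Icc A x i hq
    nlinarith
  exact ⟨q, hq, (EuclideanSpace.norm_sq_le_add_sq_of_eqOn_compl hqp).trans (by linarith)⟩
end

section
/- Let P = μ_1 ⊗ ⋯ ⊗ μ_n be a product probability measure on X = Ω_1 × ⋯ × Ω_n. Let F : X → ℝ be measurable and such that for every x ∈ X there exists a = a(x) ∈ [0, ∞)^n with |a| = 1 (Euclidean norm) such that F(x) ≤ F(y) + d_a(x, y) for every y ∈ X, where d_a(x, y) = Σ_{i=1}^n a_i 1_{x_i ≠ y_i}. Then, if M is a median of F under P (i.e., P(F ≥ M) ≥ 1/2 and P(F ≤ M) ≥ 1/2), for every r ≥ 0, P(|F − M| ≥ r) ≤ 4 e^{−r²/4}. -/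
/-!
Talagrand's convex distance inequality `P(A) · P(f_c(A, ·)² ≥ t) ≤ exp (-t / 4)` does the work.
If `F ≤ K` on `A` and `F(x) ≥ K + r`, averaging `F(x) ≤ F(y) + d_a(x, y)` over a convex
combination of points `y ∈ A` and applying Cauchy–Schwarz gives `f_c(A, x) ≥ r`. Taking `K = M`
and `K = M - r`, the median puts mass at least `1/2` on the partner set, so each tail is at most
`2 exp (-r² / 4)`.

Talagrand's inequality, in the form `∫ exp (f_c(A, ·)² / 4) dP ≤ 1 / P(A)`, goes by induction on
the number of coordinates. Writing `x = (ω, z)`, convexity of the hull gives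
`f_c(A, x)² ≤ λ f_c(A_ω, z)² + (1 - λ) f_c(B, z)² + (1 - λ)²` for the section `A_ω` and the
projection `B`. Hölder's inequality then reduces the step to
`min_λ exp ((1 - λ)² / 4) g^(-λ) ≤ 2 - g` for `g = P(A_ω) / P(B) ∈ [0, 1]`, and the integration
over `ω` to `u (2 - u) ≤ 1`. As `f_c(A, ·)` need not be measurable, the induction carries
measurable majorants, chosen measurably in a parameter so that those of the sections can be
integrated over `ω`, and the projection is replaced by its measurable part of non-null fibres.
-/

open MeasureTheory
open scoped Classical ENNReal
open Real Set

namespace ConvexDistance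

section General

variable {ι : Type*} {Ω : ι → Type*}

noncomputable def mismatch (x y : ∀ i, Ω i) (i : ι) : ℝ := if x i ≠ y i then 1 else 0

lemma mismatch_mem_Icc (x y : ∀ i, Ω i) : mismatch x y ∈ Icc 0 1 :=
  ⟨fun i => by unfold mismatch; split_ifs <;> norm_num,
    fun i => by unfold mismatch; split_ifs <;> norm_num⟩

lemma convexHull_mismatch_subset_Icc {A : Set (∀ i, Ω i)} {x : ∀ i, Ω i} :
    convexHull ℝ (mismatch x '' A) ⊆ Icc 0 1 :=
  convexHull_min (image_subset_iff.2 fun y _ => mismatch_mem_Icc x y) (convex_Icc 0 1)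

variable [Fintype ι]

/-- Talagrand's convex distance `f_c(A, x)`, squared. The hull of the mismatch vectors replaces
Talagrand's hull of their upward closure, which is as close to `0`. For empty `A` the value is the
junk `sInf ∅ = 0`. -/
noncomputable def convexDistSq (A : Set (∀ i, Ω i)) (x : ∀ i, Ω i) : ℝ :=
  sInf ((fun v : ι → ℝ => ∑ i, v i ^ 2) '' convexHull ℝ (mismatch x '' A))

variable {A B : Set (∀ i, Ω i)} {x : ∀ i, Ω i}

lemma convexDistSq_le {v : ι → ℝ} (hv : v ∈ convexHull ℝ (mismatch x '' A)) :
    convexDistSq A x ≤ ∑ i, v i ^ 2 :=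
  csInf_le ⟨0, forall_mem_image.2 fun _ _ => by positivity⟩ (mem_image_of_mem _ hv)

lemma le_convexDistSq {c : ℝ} (hA : A.Nonempty)
    (h : ∀ v ∈ convexHull ℝ (mismatch x '' A), c ≤ ∑ i, v i ^ 2) : c ≤ convexDistSq A x :=
  le_csInf ((hA.image _).convexHull.image _) (forall_mem_image.2 h)

lemma convexDistSq_anti (hAB : A ⊆ B) (hA : A.Nonempty) :
    convexDistSq B x ≤ convexDistSq A x :=
  le_convexDistSq hA fun _ hv => convexDistSq_le (convexHull_mono (image_mono hAB) hv)

lemma sq_le_convexDistSq {F : (∀ i, Ω i) → ℝ} {a : ι → ℝ} {K r : ℝ} (hA : A.Nonempty)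
    (ha : ∑ i, a i ^ 2 = 1) (hFx : ∀ y, F x ≤ F y + ∑ i, a i * mismatch x y i)
    (hFA : ∀ y ∈ A, F y ≤ K) (hr : 0 ≤ r) (hx : K + r ≤ F x) : r ^ 2 ≤ convexDistSq A x := by
  refine le_convexDistSq hA fun v hv => ?_
  have hlin : IsLinearMap ℝ fun v : ι → ℝ => ∑ i, a i * v i :=
    ⟨fun v w => by simp [mul_add, Finset.sum_add_distrib],
      fun c v => by simp [Finset.mul_sum, mul_left_comm]⟩
  have hav : r ≤ ∑ i, a i * v i := by
    refine convexHull_min ?_ (convex_halfSpace_ge hlin r) hv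
    rintro _ ⟨y, hy, rfl⟩
    show r ≤ _
    linarith [hFx y, hFA y hy]
  calc r ^ 2 ≤ (∑ i, a i * v i) ^ 2 := pow_le_pow_left₀ hr hav 2
    _ ≤ (∑ i, a i ^ 2) * ∑ i, v i ^ 2 := Finset.sum_mul_sq_le_sq_mul_sq _ _ _
    _ = ∑ i, v i ^ 2 := by rw [ha, one_mul]

lemma le_mul_convexDistSq_add_mul_convexDistSq {c t : ℝ} (ht0 : 0 ≤ t) (ht1 : t ≤ 1)
    (hA : A.Nonempty) (hB : B.Nonempty)
    (h : ∀ u ∈ convexHull ℝ (mismatch x '' A), ∀ v ∈ convexHull ℝ (mismatch x '' B),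
      c ≤ t * ∑ i, u i ^ 2 + (1 - t) * ∑ i, v i ^ 2) :
    c ≤ t * convexDistSq A x + (1 - t) * convexDistSq B x := by
  have hA' : ((fun v : ι → ℝ => ∑ i, v i ^ 2) '' convexHull ℝ (mismatch x '' A)).Nonempty :=
    (hA.image _).convexHull.image _
  have hB' : ((fun v : ι → ℝ => ∑ i, v i ^ 2) '' convexHull ℝ (mismatch x '' B)).Nonempty :=
    (hB.image _).convexHull.image _
  refine le_of_forall_pos_le_add fun ε hε => ?_
  obtain ⟨_, ⟨u, hu, rfl⟩, hu'⟩ := Real.lt_sInf_add_pos hA' hε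
  obtain ⟨_, ⟨v, hv, rfl⟩, hv'⟩ := Real.lt_sInf_add_pos hB' hε
  have := h u hu v hv
  unfold convexDistSq
  nlinarith [mul_le_mul_of_nonneg_left hu'.le ht0,
    mul_le_mul_of_nonneg_left hv'.le (sub_nonneg.2 ht1)]

end General

section Split

variable {m : ℕ} {Ω : Fin (m + 1) → Type*} {A : Set (∀ i, Ω i)}
  {B : Set (∀ j, Ω (Fin.succAbove 0 j))}

lemma mismatch_insertNth_insertNth (ω : Ω 0) (z y : ∀ j, Ω (Fin.succAbove 0 j)) :
    mismatch (Fin.insertNth 0 ω z) (Fin.insertNth 0 ω y) = Fin.insertNth 0 0 (mismatch z y) := by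
  ext i
  induction i using Fin.succAboveCases 0 with
  | x => simp [mismatch]
  | p j => simp only [mismatch, Fin.insertNth_apply_succAbove]

lemma isLinearMap_removeNth : IsLinearMap ℝ (Fin.removeNth 0 : (Fin (m + 1) → ℝ) → Fin m → ℝ) :=
  ⟨fun _ _ => rfl, fun _ _ => rfl⟩

lemma isLinearMap_insertNth_zero :
    IsLinearMap ℝ fun s : Fin m → ℝ => (Fin.insertNth 0 0 s : Fin (m + 1) → ℝ) := by
  refine ⟨fun s t => ?_, fun c s => ?_⟩ <;> ext i <;>
    induction i using Fin.succAboveCases 0 <;> simp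

lemma insertNth_mem_convexHull {ω : Ω 0} {z : ∀ j, Ω (Fin.succAbove 0 j)} {s : Fin m → ℝ}
    (hs : s ∈ convexHull ℝ (mismatch z '' {y | Fin.insertNth 0 ω y ∈ A})) :
    Fin.insertNth 0 0 s ∈ convexHull ℝ (mismatch (Fin.insertNth 0 ω z) '' A) := by
  refine convexHull_min ?_
    ((convex_convexHull ℝ _).is_linear_preimage isLinearMap_insertNth_zero) hs
  rintro _ ⟨y, hy, rfl⟩
  rw [mem_preimage, ← mismatch_insertNth_insertNth]
  exact subset_convexHull ℝ _ (mem_image_of_mem _ hy)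

lemma exists_removeNth_eq_of_mem_convexHull (hB : B ⊆ Fin.removeNth 0 '' A) (ω : Ω 0)
    {z : ∀ j, Ω (Fin.succAbove 0 j)} {t : Fin m → ℝ} (ht : t ∈ convexHull ℝ (mismatch z '' B)) :
    ∃ v ∈ convexHull ℝ (mismatch (Fin.insertNth 0 ω z) '' A), Fin.removeNth 0 v = t := by
  refine convexHull_min ?_ ((convex_convexHull ℝ _).is_linear_image isLinearMap_removeNth) ht
  rintro _ ⟨q, hq, rfl⟩
  obtain ⟨p, hp, rfl⟩ := hB hq
  refine ⟨_, subset_convexHull ℝ _ (mem_image_of_mem _ hp), ?_⟩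
  conv_rhs => rw [← Fin.removeNth_insertNth 0 ω z]
  rfl

lemma sq_apply_le_one_of_mem_convexHull {x : ∀ i, Ω i} {v : Fin (m + 1) → ℝ}
    (hv : v ∈ convexHull ℝ (mismatch x '' A)) (i : Fin (m + 1)) : v i ^ 2 ≤ 1 :=
  pow_le_one₀ ((convexHull_mismatch_subset_Icc hv).1 i) ((convexHull_mismatch_subset_Icc hv).2 i)

lemma sq_mul_add_one_sub_mul_le {t a b : ℝ} (ht0 : 0 ≤ t) (ht1 : t ≤ 1) :
    (t * a + (1 - t) * b) ^ 2 ≤ t * a ^ 2 + (1 - t) * b ^ 2 := by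
  nlinarith [sq_nonneg (a - b), mul_nonneg ht0 (sub_nonneg.2 ht1)]

lemma convexDistSq_insertNth_le_add_one (hB : B ⊆ Fin.removeNth 0 '' A) (hBne : B.Nonempty)
    (ω : Ω 0) (z : ∀ j, Ω (Fin.succAbove 0 j)) :
    convexDistSq A (Fin.insertNth 0 ω z) ≤ convexDistSq B z + 1 := by
  rw [← sub_le_iff_le_add]
  refine le_convexDistSq hBne fun t ht => ?_
  obtain ⟨v, hv, rfl⟩ := exists_removeNth_eq_of_mem_convexHull hB ω ht
  have := convexDistSq_le hv
  rw [Fin.sum_univ_succAbove _ 0] at this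
  simp only [Fin.removeNth]
  linarith [sq_apply_le_one_of_mem_convexHull hv 0]

/-- Averaging a point of the hull over the section at `ω` with one over the projection `B`, only
the first coordinate is paid for, with weight `1 - t`. -/
lemma convexDistSq_insertNth_le_mix (hB : B ⊆ Fin.removeNth 0 '' A) (hBne : B.Nonempty)
    (ω : Ω 0) (z : ∀ j, Ω (Fin.succAbove 0 j)) {t : ℝ} (ht0 : 0 ≤ t) (ht1 : t ≤ 1)
    (hsec : {y | Fin.insertNth 0 ω y ∈ A}.Nonempty) :
    convexDistSq A (Fin.insertNth 0 ω z) ≤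
      t * convexDistSq {y | Fin.insertNth 0 ω y ∈ A} z + (1 - t) * convexDistSq B z
        + (1 - t) ^ 2 := by
  rw [← sub_le_iff_le_add]
  refine le_mul_convexDistSq_add_mul_convexDistSq ht0 ht1 hsec hBne fun s hs u hu => ?_
  obtain ⟨v, hv, rfl⟩ := exists_removeNth_eq_of_mem_convexHull hB ω hu
  have hw := convex_convexHull ℝ _ (insertNth_mem_convexHull hs) hv ht0 (sub_nonneg.2 ht1)
    (add_sub_cancel t 1)
  have := convexDistSq_le hw
  rw [Fin.sum_univ_succAbove _ 0] at this
  simp only [Pi.add_apply, Pi.smul_apply, smul_eq_mul, Fin.insertNth_apply_same,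
    Fin.insertNth_apply_succAbove, mul_zero, zero_add] at this
  have hcoord : ∑ j, (t * s j + (1 - t) * v (Fin.succAbove 0 j)) ^ 2 ≤
      t * ∑ j, s j ^ 2 + (1 - t) * ∑ j, v (Fin.succAbove 0 j) ^ 2 := by
    rw [Finset.mul_sum, Finset.mul_sum, ← Finset.sum_add_distrib]
    exact Finset.sum_le_sum fun j _ => sq_mul_add_one_sub_mul_le ht0 ht1
  simp only [Fin.removeNth]
  nlinarith [mul_le_mul_of_nonneg_left (sq_apply_le_one_of_mem_convexHull hv 0)
    (sq_nonneg (1 - t))]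

lemma convexDistSq_insertNth_le (hB : B ⊆ Fin.removeNth 0 '' A) (hBne : B.Nonempty)
    (ω : Ω 0) (z : ∀ j, Ω (Fin.succAbove 0 j)) {t : ℝ} (ht0 : 0 ≤ t) (ht1 : t ≤ 1)
    (hsec : 0 < t → {y | Fin.insertNth 0 ω y ∈ A}.Nonempty) :
    convexDistSq A (Fin.insertNth 0 ω z) ≤
      t * convexDistSq {y | Fin.insertNth 0 ω y ∈ A} z + (1 - t) * convexDistSq B z
        + (1 - t) ^ 2 := by
  rcases ht0.eq_or_lt with rfl | ht
  · simpa [add_comm] using convexDistSq_insertNth_le_add_one hB hBne ω z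
  · exact convexDistSq_insertNth_le_mix hB hBne ω z ht0 ht1 (hsec ht)

end Split

lemma exp_le_cubic {x : ℝ} (hx : |x| ≤ 1) : exp x ≤ 1 + x + x ^ 2 / 2 + 2 / 9 * |x| ^ 3 := by
  have h := (abs_le.1 (Real.exp_bound hx (n := 3) (by norm_num))).2
  norm_num [Finset.sum_range_succ, Nat.factorial] at h
  linarith

lemma exp_sub_sq_add_exp_neg_le_two {t : ℝ} (ht0 : 0 ≤ t) (ht1 : t ≤ 1 / 2) :
    exp (t - t ^ 2) + exp (-t) ≤ 2 := by
  have hs : |t - t ^ 2| ≤ 1 := abs_le.2 ⟨by nlinarith, by nlinarith⟩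
  have h1 := exp_le_cubic hs
  have h2 := exp_le_cubic (x := -t) (by rw [abs_neg, abs_of_nonneg ht0]; linarith)
  rw [abs_of_nonneg (by nlinarith : 0 ≤ t - t ^ 2)] at h1
  rw [abs_neg, abs_of_nonneg ht0] at h2
  nlinarith [pow_le_pow_left₀ (by nlinarith : 0 ≤ t - t ^ 2) (by nlinarith : t - t ^ 2 ≤ t) 3]

/-- `λ = 1 + 2 log g` minimises `(1 - λ)² / 4 - λ log g`, i.e. `exp ((1 - λ)² / 4) g^(-λ)`;
below `g = exp (-1/2)` it would be negative, and `λ = 0` is used instead. -/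
noncomputable def talagrandExponent (g : ℝ) : ℝ :=
  if exp (-2⁻¹) ≤ g then 1 + 2 * log g else 0

lemma talagrandExponent_nonneg (g : ℝ) : 0 ≤ talagrandExponent g := by
  unfold talagrandExponent
  split_ifs with h
  · linarith [(le_log_iff_exp_le ((exp_pos _).trans_le h)).2 h]
  · exact le_rfl

lemma talagrandExponent_le_one {g : ℝ} (hg : g ≤ 1) : talagrandExponent g ≤ 1 := by
  unfold talagrandExponent
  split_ifs with h
  · linarith [log_nonpos ((exp_pos _).trans_le h).le hg]
  · exact zero_le_one

lemma pos_of_talagrandExponent_pos {g : ℝ} (h : 0 < talagrandExponent g) : 0 < g := by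
  unfold talagrandExponent at h
  split_ifs at h with hg
  · exact (exp_pos _).trans_le hg
  · exact absurd h (lt_irrefl 0)

lemma measurable_talagrandExponent : Measurable talagrandExponent :=
  Measurable.ite (measurableSet_le measurable_const measurable_id)
    (measurable_const.add (measurable_log.const_mul 2)) measurable_const

lemma exp_mul_rpow_talagrandExponent_le {g : ℝ} (hg0 : 0 ≤ g) (hg1 : g ≤ 1) :
    exp ((1 - talagrandExponent g) ^ 2 / 4) * g ^ (-talagrandExponent g) ≤ 2 - g := by
  unfold talagrandExponent
  split_ifs with h
  · -- with `g = exp (-t)` the left side is `exp (t - t²)`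
    have hgpos := (exp_pos _).trans_le h
    set t := -log g with ht
    have hg : g = exp (-t) := by rw [ht, neg_neg, exp_log hgpos]
    have ht0 : 0 ≤ t := neg_nonneg.2 (log_nonpos hg0 hg1)
    have ht1 : t ≤ 1 / 2 := by linarith [(le_log_iff_exp_le hgpos).2 h]
    rw [rpow_def_of_pos hgpos, ← exp_add]
    have : (1 - (1 + 2 * log g)) ^ 2 / 4 + log g * -(1 + 2 * log g) = t - t ^ 2 := by
      rw [ht]; ring
    rw [this]
    linarith [exp_sub_sq_add_exp_neg_le_two ht0 ht1]
  · have h' := exp_sub_sq_add_exp_neg_le_two (t := 1 / 2) (by norm_num) le_rfl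
    norm_num at h' ⊢
    linarith

lemma ofReal_exp_mul_inv_rpow_le {a b : ℝ≥0∞} (hab : a ≤ b) (hb0 : b ≠ 0) (hbtop : b ≠ ∞) :
    ENNReal.ofReal (exp ((1 - talagrandExponent (a / b).toReal) ^ 2 / 4)) *
        (a⁻¹ ^ talagrandExponent (a / b).toReal * b⁻¹ ^ (1 - talagrandExponent (a / b).toReal))
      ≤ b⁻¹ * (2 - a / b) := by
  set g := (a / b).toReal
  set l := talagrandExponent g
  have hab' : a / b ≤ 1 := ENNReal.div_le_of_le_mul (by rwa [one_mul])
  have hg : a / b = ENNReal.ofReal g :=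
    (ENNReal.ofReal_toReal (ne_top_of_le_ne_top ENNReal.one_ne_top hab')).symm
  have hg1 : g ≤ 1 := ENNReal.toReal_le_of_le_ofReal zero_le_one (by simpa using hab')
  have ha : a = ENNReal.ofReal g * b := by rw [← hg, ENNReal.div_mul_cancel hb0 hbtop]
  have hpow : a⁻¹ ^ l * b⁻¹ ^ (1 - l) = ENNReal.ofReal (g ^ (-l)) * b⁻¹ := by
    rcases (talagrandExponent_nonneg g).eq_or_lt with hl | hl
    · rw [show l = 0 from hl.symm]; simp
    · have hgpos := pos_of_talagrandExponent_pos hl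
      rw [ha, ENNReal.mul_inv (Or.inr hbtop) (Or.inl ENNReal.ofReal_ne_top),
        ENNReal.mul_rpow_of_nonneg _ _ hl.le, mul_assoc,
        ← ENNReal.rpow_add _ _ (ENNReal.inv_ne_zero.2 hbtop) (ENNReal.inv_ne_top.2 hb0),
        add_sub_cancel, ENNReal.rpow_one, ← ENNReal.ofReal_inv_of_pos hgpos,
        ENNReal.ofReal_rpow_of_pos (inv_pos.2 hgpos), Real.inv_rpow hgpos.le,
        Real.rpow_neg hgpos.le]
  rw [hpow, hg, ← mul_assoc, ← ENNReal.ofReal_mul (exp_pos _).le, mul_comm,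
    ← ENNReal.ofReal_ofNat 2, ← ENNReal.ofReal_sub _ ENNReal.toReal_nonneg]
  gcongr
  exact exp_mul_rpow_talagrandExponent_le ENNReal.toReal_nonneg hg1

lemma inv_mul_two_sub_div_le_inv {u b : ℝ≥0∞} (hub : u ≤ b) (hb : b ≠ ∞) :
    b⁻¹ * (2 - u / b) ≤ u⁻¹ := by
  rcases eq_or_ne u 0 with rfl | hu
  · simp
  have hb0 : b ≠ 0 := (pos_iff_ne_zero.2 hu |>.trans_le hub).ne'
  lift b to NNReal using hb
  lift u to NNReal using ne_top_of_le_ne_top ENNReal.coe_ne_top hub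
  have hu' : u ≠ 0 := by exact_mod_cast hu
  have hb' : b ≠ 0 := by exact_mod_cast hb0
  have hub' : u ≤ b := by exact_mod_cast hub
  have h2 : u / b ≤ 2 := (div_le_one_of_le₀ hub' b.2).trans one_le_two
  rw [← ENNReal.coe_div hb', ← ENNReal.coe_inv hb', ← ENNReal.coe_inv hu', ← ENNReal.coe_ofNat,
    ← ENNReal.coe_sub, ← ENNReal.coe_mul, ENNReal.coe_le_coe, ← NNReal.coe_le_coe,
    NNReal.coe_mul, NNReal.coe_sub h2]
  have hupos : (0 : ℝ) < u := by positivity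
  have hbpos : (0 : ℝ) < b := by positivity
  push_cast
  field_simp
  nlinarith [sq_nonneg ((b : ℝ) - u)]

lemma rpow_le_rpow_of_pos_imp {a b : ℝ≥0∞} {p : ℝ} (hp : 0 ≤ p) (h : 0 < p → a ≤ b) :
    a ^ p ≤ b ^ p := by
  rcases hp.eq_or_lt with rfl | hp
  · simp
  · exact ENNReal.rpow_le_rpow (h hp) hp.le

lemma ofReal_exp_div_four_le_mul_rpow {c u v t : ℝ} (h : c ≤ t * u + (1 - t) * v + (1 - t) ^ 2) :
    ENNReal.ofReal (exp (c / 4)) ≤ ENNReal.ofReal (exp ((1 - t) ^ 2 / 4)) *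
      (ENNReal.ofReal (exp (u / 4)) ^ t * ENNReal.ofReal (exp (v / 4)) ^ (1 - t)) := by
  rw [ENNReal.ofReal_rpow_of_pos (exp_pos _), ENNReal.ofReal_rpow_of_pos (exp_pos _),
    ← ENNReal.ofReal_mul (by positivity), ← ENNReal.ofReal_mul (by positivity), ← exp_mul,
    ← exp_mul, ← exp_add, ← exp_add]
  gcongr
  linarith

lemma lintegral_inv_mul_two_sub_div {α : Type*} [MeasurableSpace α] (ν : Measure α)
    [IsProbabilityMeasure ν] {f : α → ℝ≥0∞} (hf : Measurable f) {b : ℝ≥0∞} (hb : b ≠ 0)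
    (hfb : ∀ a, f a ≤ b) :
    ∫⁻ a, b⁻¹ * (2 - f a / b) ∂ν = b⁻¹ * (2 - (∫⁻ a, f a ∂ν) / b) := by
  have hf1 : ∀ a, f a / b ≤ 1 := fun a => ENNReal.div_le_of_le_mul (by rw [one_mul]; exact hfb a)
  have hint : ∫⁻ a, f a / b ∂ν ≠ ∞ :=
    ne_top_of_le_ne_top ENNReal.one_ne_top ((lintegral_mono hf1).trans (by simp))
  rw [lintegral_const_mul' _ _ (ENNReal.inv_ne_top.2 hb),
    lintegral_sub (hf.div_const b) hint
      (Filter.Eventually.of_forall fun a => (hf1 a).trans one_le_two),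
    lintegral_const, measure_univ, mul_one]
  simp only [div_eq_mul_inv]
  rw [lintegral_mul_const' _ _ (ENNReal.inv_ne_top.2 hb)]

section Coordinates

variable {m : ℕ} {Ω : Fin (m + 1) → Type*} [∀ i, MeasurableSpace (Ω i)]

lemma measurable_removeNth_zero :
    Measurable (Fin.removeNth 0 : (∀ i, Ω i) → ∀ j, Ω (Fin.succAbove 0 j)) :=
  measurable_pi_lambda _ fun _ => measurable_pi_apply _

lemma measurable_insertNth_zero :
    Measurable fun p : Ω 0 × (∀ j, Ω (Fin.succAbove 0 j)) => Fin.insertNth 0 p.1 p.2 :=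
  (MeasurableEquiv.piFinSuccAbove Ω 0).symm.measurable

variable (μ : ∀ i, Measure (Ω i)) [∀ i, SigmaFinite (μ i)]

lemma lintegral_pi_eq_lintegral_insertNth {h : (∀ i, Ω i) → ℝ≥0∞} (hh : Measurable h) :
    ∫⁻ x, h x ∂Measure.pi μ =
      ∫⁻ ω, ∫⁻ z, h (Fin.insertNth 0 ω z) ∂Measure.pi (fun j => μ (Fin.succAbove 0 j)) ∂μ 0 := by
  rw [← ((measurePreserving_piFinSuccAbove μ 0).symm).lintegral_comp_emb
    (MeasurableEquiv.measurableEmbedding _)]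
  exact lintegral_prod _ (hh.comp (MeasurableEquiv.measurable _)).aemeasurable

lemma measure_pi_eq_lintegral_section {A : Set (∀ i, Ω i)} (hA : MeasurableSet A) :
    Measure.pi μ A =
      ∫⁻ ω, Measure.pi (fun j => μ (Fin.succAbove 0 j)) {z | Fin.insertNth 0 ω z ∈ A} ∂μ 0 := by
  rw [← ((measurePreserving_piFinSuccAbove μ 0).symm).measure_preimage hA.nullMeasurableSet,
    Measure.prod_apply (hA.preimage (MeasurableEquiv.measurable _))]
  rfl

lemma measure_pi_eq_lintegral_fibre {A : Set (∀ i, Ω i)} (hA : MeasurableSet A) :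
    Measure.pi μ A =
      ∫⁻ z, μ 0 {ω | Fin.insertNth 0 ω z ∈ A} ∂Measure.pi (fun j => μ (Fin.succAbove 0 j)) := by
  rw [← ((measurePreserving_piFinSuccAbove μ 0).symm).measure_preimage hA.nullMeasurableSet,
    Measure.prod_apply_symm (hA.preimage (MeasurableEquiv.measurable _))]
  rfl

lemma measurable_measure_section {A : Set (∀ i, Ω i)} (hA : MeasurableSet A) :
    Measurable fun ω : Ω 0 =>
      Measure.pi (fun j => μ (Fin.succAbove 0 j)) {z | Fin.insertNth 0 ω z ∈ A} :=
  measurable_measure_prodMk_left (hA.preimage measurable_insertNth_zero)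

lemma measure_pi_le_of_sections [IsProbabilityMeasure (μ 0)] {A : Set (∀ i, Ω i)}
    (hA : MeasurableSet A)
    {B : Set (∀ j, Ω (Fin.succAbove 0 j))} (hAB : ∀ ω z, Fin.insertNth 0 ω z ∈ A → z ∈ B) :
    Measure.pi μ A ≤ Measure.pi (fun j => μ (Fin.succAbove 0 j)) B := by
  rw [measure_pi_eq_lintegral_section μ hA]
  calc _ ≤ ∫⁻ _, Measure.pi (fun j => μ (Fin.succAbove 0 j)) B ∂μ 0 :=
        lintegral_mono fun ω => measure_mono fun z => hAB ω z
    _ = _ := by rw [lintegral_const, measure_univ, mul_one]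

end Coordinates

section Restrict

variable {m : ℕ} {Ω : Fin (m + 1) → Type*} [∀ i, MeasurableSpace (Ω i)]

/-- The projection of `A` along the first coordinate, keeping only points with non-null fibre.
Unlike `Fin.removeNth 0 '' A` it is measurable, and restricting `A` to it costs no measure. -/
def essProj (ν : Measure (Ω 0)) (A : Set (∀ i, Ω i)) : Set (∀ j, Ω (Fin.succAbove 0 j)) :=
  {z | 0 < ν {ω | Fin.insertNth 0 ω z ∈ A}}

def essRestrict (ν : Measure (Ω 0)) (A : Set (∀ i, Ω i)) : Set (∀ i, Ω i) :=
  A ∩ Fin.removeNth 0 ⁻¹' essProj ν A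

variable {ν : Measure (Ω 0)} {A : Set (∀ i, Ω i)}

lemma mem_essProj_of_insertNth_mem_essRestrict {ω : Ω 0} {z : ∀ j, Ω (Fin.succAbove 0 j)}
    (h : Fin.insertNth 0 ω z ∈ essRestrict ν A) : z ∈ essProj ν A := by
  have := h.2
  rwa [mem_preimage, Fin.removeNth_insertNth] at this

lemma essProj_subset_image_essRestrict :
    essProj ν A ⊆ Fin.removeNth 0 '' essRestrict ν A := by
  intro z hz
  obtain ⟨ω, hω⟩ := nonempty_of_measure_ne_zero hz.ne'
  refine ⟨Fin.insertNth 0 ω z, ⟨hω, ?_⟩, Fin.removeNth_insertNth _ _ _⟩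
  rwa [mem_preimage, Fin.removeNth_insertNth]

lemma measurableSet_essProj [SFinite ν] (hA : MeasurableSet A) : MeasurableSet (essProj ν A) :=
  measurable_measure_prodMk_right (hA.preimage measurable_insertNth_zero) measurableSet_Ioi

lemma measurableSet_essRestrict [SFinite ν] (hA : MeasurableSet A) :
    MeasurableSet (essRestrict ν A) :=
  hA.inter ((measurableSet_essProj hA).preimage measurable_removeNth_zero)

lemma measurableSet_setOf_mem_essProj [SFinite ν] {Y : Type*} [MeasurableSpace Y]
    {S : Set (Y × ∀ i, Ω i)} (hS : MeasurableSet S) :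
    MeasurableSet {p : Y × ∀ j, Ω (Fin.succAbove 0 j) | p.2 ∈ essProj ν {x | (p.1, x) ∈ S}} :=
  measurable_measure_prodMk_left (hS.preimage (measurable_fst.fst.prodMk
    (measurable_insertNth_zero.comp (measurable_snd.prodMk measurable_fst.snd))))
    measurableSet_Ioi

lemma measurableSet_setOf_mem_essRestrict [SFinite ν] {Y : Type*} [MeasurableSpace Y]
    {S : Set (Y × ∀ i, Ω i)} (hS : MeasurableSet S) :
    MeasurableSet {q : Y × ∀ i, Ω i | q.2 ∈ essRestrict ν {x | (q.1, x) ∈ S}} :=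
  hS.inter ((measurableSet_setOf_mem_essProj hS).preimage
    (measurable_fst.prodMk (measurable_removeNth_zero.comp measurable_snd)))

lemma measure_essRestrict (μ : ∀ i, Measure (Ω i)) [∀ i, SigmaFinite (μ i)]
    (hA : MeasurableSet A) : Measure.pi μ (essRestrict (μ 0) A) = Measure.pi μ A := by
  have hT := (measurableSet_essProj (ν := μ 0) hA).preimage measurable_removeNth_zero
  have hnull : Measure.pi μ (A \ Fin.removeNth 0 ⁻¹' essProj (μ 0) A) = 0 := by
    rw [measure_pi_eq_lintegral_fibre μ (hA.diff hT)]
    refine (lintegral_congr fun z => ?_).trans lintegral_zero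
    by_cases hz : z ∈ essProj (μ 0) A
    · refine measure_mono_null (fun ω hω => hω.2 ?_) measure_empty
      rwa [mem_preimage, Fin.removeNth_insertNth]
    · exact measure_mono_null (fun ω hω => hω.1) (nonpos_iff_eq_zero.1 (not_lt.1 hz))
  rw [essRestrict, ← add_zero (Measure.pi μ (A ∩ _)), ← hnull, measure_inter_add_sdiff _ hT]

end Restrict

section Majorant

variable {ι : Type*} [Fintype ι] {Ω : ι → Type*} [∀ i, MeasurableSpace (Ω i)]

/-- Talagrand's inequality `∫ exp (f_c(A, ·)² / 4) dP ≤ 1 / P(A)` for a majorant `g` of the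
integrand, which itself need not be measurable. -/
def IsConvexDistMajorant (P : Measure (∀ i, Ω i)) (A : Set (∀ i, Ω i))
    (g : (∀ i, Ω i) → ℝ≥0∞) : Prop :=
  (∀ x, ENNReal.ofReal (exp (convexDistSq A x / 4)) ≤ g x) ∧ ∫⁻ x, g x ∂P ≤ (P A)⁻¹

end Majorant

section Step

variable {m : ℕ} {Ω : Fin (m + 1) → Type*} [∀ i, MeasurableSpace (Ω i)]
  (μ : ∀ i, Measure (Ω i))

local notation "P'" => Measure.pi fun j => μ (Fin.succAbove 0 j)

noncomputable def sectionExponent (A : Set (∀ i, Ω i)) (B : Set (∀ j, Ω (Fin.succAbove 0 j)))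
    (ω : Ω 0) : ℝ :=
  talagrandExponent ((P' {z | Fin.insertNth 0 ω z ∈ A} / P' B).toReal)

/-- At `x = (ω, z)`, the geometric interpolation with exponent `λ = sectionExponent μ A B ω`
between the majorant `g₁ ω` for the section of `A` at `ω` and the majorant `g₂` for the
projection `B`; the factor `exp ((1 - λ)² / 4)` pays for the first coordinate. -/
noncomputable def stepMajorant (A : Set (∀ i, Ω i)) (B : Set (∀ j, Ω (Fin.succAbove 0 j)))
    (g₁ : Ω 0 → (∀ j, Ω (Fin.succAbove 0 j)) → ℝ≥0∞) (g₂ : (∀ j, Ω (Fin.succAbove 0 j)) → ℝ≥0∞)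
    (x : ∀ i, Ω i) : ℝ≥0∞ :=
  ENNReal.ofReal (exp ((1 - sectionExponent μ A B (x 0)) ^ 2 / 4)) *
    (g₁ (x 0) (Fin.removeNth 0 x) ^ sectionExponent μ A B (x 0) *
      g₂ (Fin.removeNth 0 x) ^ (1 - sectionExponent μ A B (x 0)))

variable {μ} {A : Set (∀ i, Ω i)} {B : Set (∀ j, Ω (Fin.succAbove 0 j))}
  {g₁ : Ω 0 → (∀ j, Ω (Fin.succAbove 0 j)) → ℝ≥0∞} {g₂ : (∀ j, Ω (Fin.succAbove 0 j)) → ℝ≥0∞}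

lemma sectionExponent_mem_Icc (hAB : ∀ ω z, Fin.insertNth 0 ω z ∈ A → z ∈ B) (ω : Ω 0) :
    sectionExponent μ A B ω ∈ Icc 0 1 := by
  have h : P' {z | Fin.insertNth 0 ω z ∈ A} / P' B ≤ 1 :=
    ENNReal.div_le_of_le_mul (by rw [one_mul]; exact measure_mono fun z => hAB ω z)
  exact ⟨talagrandExponent_nonneg _, talagrandExponent_le_one
    (ENNReal.toReal_le_of_le_ofReal zero_le_one (by simpa using h))⟩

lemma measure_section_pos_of_sectionExponent_pos {ω : Ω 0} (h : 0 < sectionExponent μ A B ω) :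
    0 < P' {z | Fin.insertNth 0 ω z ∈ A} :=
  pos_iff_ne_zero.2 fun h0 => by
    have := pos_of_talagrandExponent_pos h
    rw [h0, ENNReal.zero_div, ENNReal.toReal_zero] at this
    exact lt_irrefl 0 this

lemma le_stepMajorant (hB : B ⊆ Fin.removeNth 0 '' A) (hBne : B.Nonempty)
    (hAB : ∀ ω z, Fin.insertNth 0 ω z ∈ A → z ∈ B)
    (hg₁ : ∀ ω, 0 < P' {z | Fin.insertNth 0 ω z ∈ A} →
      ∀ z, ENNReal.ofReal (exp (convexDistSq {z | Fin.insertNth 0 ω z ∈ A} z / 4)) ≤ g₁ ω z)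
    (hg₂ : ∀ z, ENNReal.ofReal (exp (convexDistSq B z / 4)) ≤ g₂ z) (x : ∀ i, Ω i) :
    ENNReal.ofReal (exp (convexDistSq A x / 4)) ≤ stepMajorant μ A B g₁ g₂ x := by
  obtain ⟨ω, z, rfl⟩ : ∃ ω z, Fin.insertNth 0 ω z = x :=
    ⟨x 0, Fin.removeNth 0 x, Fin.insertNth_self_removeNth 0 x⟩
  obtain ⟨hl0, hl1⟩ := sectionExponent_mem_Icc (μ := μ) hAB ω
  have hpos := fun h =>
    measure_section_pos_of_sectionExponent_pos (μ := μ) (A := A) (B := B) (ω := ω) h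
  refine (ofReal_exp_div_four_le_mul_rpow (convexDistSq_insertNth_le hB hBne ω z hl0 hl1
    fun h => nonempty_of_measure_ne_zero (hpos h).ne')).trans ?_
  simp only [stepMajorant, Fin.insertNth_apply_same, Fin.removeNth_insertNth]
  exact mul_le_mul' le_rfl (mul_le_mul' (rpow_le_rpow_of_pos_imp hl0 fun h => hg₁ ω (hpos h) z)
    (ENNReal.rpow_le_rpow (hg₂ z) (sub_nonneg.2 hl1)))

variable [∀ i, IsProbabilityMeasure (μ i)]

lemma lintegral_stepMajorant_insertNth_le (hAB : ∀ ω z, Fin.insertNth 0 ω z ∈ A → z ∈ B)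
    (hB : P' B ≠ 0) (hg₁m : ∀ ω, Measurable (g₁ ω)) (hg₂m : Measurable g₂)
    (hg₁ : ∀ ω, 0 < P' {z | Fin.insertNth 0 ω z ∈ A} →
      ∫⁻ z, g₁ ω z ∂P' ≤ (P' {z | Fin.insertNth 0 ω z ∈ A})⁻¹)
    (hg₂ : ∫⁻ z, g₂ z ∂P' ≤ (P' B)⁻¹) (ω : Ω 0) :
    ∫⁻ z, stepMajorant μ A B g₁ g₂ (Fin.insertNth 0 ω z) ∂P' ≤
      (P' B)⁻¹ * (2 - P' {z | Fin.insertNth 0 ω z ∈ A} / P' B) := by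
  obtain ⟨hl0, hl1⟩ := sectionExponent_mem_Icc (μ := μ) hAB ω
  simp only [stepMajorant, Fin.insertNth_apply_same, Fin.removeNth_insertNth]
  rw [lintegral_const_mul' _ _ ENNReal.ofReal_ne_top]
  refine (mul_le_mul' le_rfl ?_).trans
    (ofReal_exp_mul_inv_rpow_le (measure_mono fun z => hAB ω z) hB (measure_ne_top _ _))
  calc _ ≤ (∫⁻ z, g₁ ω z ∂P') ^ sectionExponent μ A B ω *
        (∫⁻ z, g₂ z ∂P') ^ (1 - sectionExponent μ A B ω) :=
        ENNReal.lintegral_mul_norm_pow_le (hg₁m ω).aemeasurable hg₂m.aemeasurable hl0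
          (sub_nonneg.2 hl1) (add_sub_cancel _ _)
    _ ≤ _ := mul_le_mul'
        (rpow_le_rpow_of_pos_imp hl0 fun h => hg₁ ω (measure_section_pos_of_sectionExponent_pos h))
        (ENNReal.rpow_le_rpow hg₂ (sub_nonneg.2 hl1))

lemma lintegral_stepMajorant_le (hA : MeasurableSet A)
    (hAB : ∀ ω z, Fin.insertNth 0 ω z ∈ A → z ∈ B) (hG : Measurable (stepMajorant μ A B g₁ g₂))
    (hg₁m : ∀ ω, Measurable (g₁ ω)) (hg₂m : Measurable g₂)
    (hg₁ : ∀ ω, 0 < P' {z | Fin.insertNth 0 ω z ∈ A} →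
      ∫⁻ z, g₁ ω z ∂P' ≤ (P' {z | Fin.insertNth 0 ω z ∈ A})⁻¹)
    (hg₂ : ∫⁻ z, g₂ z ∂P' ≤ (P' B)⁻¹) :
    ∫⁻ x, stepMajorant μ A B g₁ g₂ x ∂Measure.pi μ ≤ (Measure.pi μ A)⁻¹ := by
  rcases eq_or_ne (Measure.pi μ A) 0 with h0 | h0
  · simp [h0]
  have hAB' := measure_pi_le_of_sections μ hA hAB
  have hB : P' B ≠ 0 := (pos_iff_ne_zero.2 h0 |>.trans_le hAB').ne'
  calc ∫⁻ x, stepMajorant μ A B g₁ g₂ x ∂Measure.pi μ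
      = ∫⁻ ω, ∫⁻ z, stepMajorant μ A B g₁ g₂ (Fin.insertNth 0 ω z) ∂P' ∂μ 0 :=
        lintegral_pi_eq_lintegral_insertNth μ hG
    _ ≤ ∫⁻ ω, (P' B)⁻¹ * (2 - P' {z | Fin.insertNth 0 ω z ∈ A} / P' B) ∂μ 0 :=
        lintegral_mono (lintegral_stepMajorant_insertNth_le hAB hB hg₁m hg₂m hg₁ hg₂)
    _ = (P' B)⁻¹ * (2 - Measure.pi μ A / P' B) := by
        rw [lintegral_inv_mul_two_sub_div _ (measurable_measure_section μ hA) hB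
          fun ω => measure_mono fun z => hAB ω z, measure_pi_eq_lintegral_section μ hA]
    _ ≤ (Measure.pi μ A)⁻¹ := inv_mul_two_sub_div_le_inv hAB' (measure_ne_top _ _)

/-- Talagrand's induction step, after trimming `A` to `essRestrict (μ 0) A` so that all its
sections lie in the measurable projection `essProj (μ 0) A`. -/
lemma isConvexDistMajorant_stepMajorant (hA : MeasurableSet A) (hPA : 0 < Measure.pi μ A)
    (hG : Measurable (stepMajorant μ (essRestrict (μ 0) A) (essProj (μ 0) A) g₁ g₂))
    (hg₁m : ∀ ω, Measurable (g₁ ω)) (hg₂m : Measurable g₂)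
    (hg₁ : ∀ ω, 0 < P' {z | Fin.insertNth 0 ω z ∈ essRestrict (μ 0) A} →
      IsConvexDistMajorant P' {z | Fin.insertNth 0 ω z ∈ essRestrict (μ 0) A} (g₁ ω))
    (hg₂ : 0 < P' (essProj (μ 0) A) → IsConvexDistMajorant P' (essProj (μ 0) A) g₂) :
    IsConvexDistMajorant (Measure.pi μ) A
      (stepMajorant μ (essRestrict (μ 0) A) (essProj (μ 0) A) g₁ g₂) := by
  have hA' := measurableSet_essRestrict (ν := μ 0) hA
  have hPA' : Measure.pi μ (essRestrict (μ 0) A) = Measure.pi μ A := measure_essRestrict μ hA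
  have hAB : ∀ ω z, Fin.insertNth 0 ω z ∈ essRestrict (μ 0) A → z ∈ essProj (μ 0) A :=
    fun _ _ => mem_essProj_of_insertNth_mem_essRestrict
  have hPB : 0 < P' (essProj (μ 0) A) :=
    (hPA'.symm ▸ hPA).trans_le (measure_pi_le_of_sections μ hA' hAB)
  refine ⟨fun x => ?_, ?_⟩
  · refine le_trans ?_ (le_stepMajorant essProj_subset_image_essRestrict
      (nonempty_of_measure_ne_zero hPB.ne') hAB (fun ω h => (hg₁ ω h).1) (hg₂ hPB).1 x)
    gcongr
    exact convexDistSq_anti inter_subset_left (nonempty_of_measure_ne_zero (hPA' ▸ hPA.ne'))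
  · rw [← hPA']
    exact lintegral_stepMajorant_le hA' hAB hG hg₁m hg₂m (fun ω h => (hg₁ ω h).2) (hg₂ hPB).2

end Step

universe u

/-- Majorants for all slices of `S`, chosen jointly measurably in the parameter: this is what
lets the induction step integrate the majorants of the sections over the first coordinate. -/
def HasMeasurableMajorants {ι : Type*} [Fintype ι] {Ω : ι → Type*} [∀ i, MeasurableSpace (Ω i)]
    (P : Measure (∀ i, Ω i)) {Y : Type*} [MeasurableSpace Y] (S : Set (Y × ∀ i, Ω i)) : Prop :=
  ∃ G : Y → (∀ i, Ω i) → ℝ≥0∞, Measurable (Function.uncurry G) ∧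
    ∀ y, 0 < P {x | (y, x) ∈ S} → IsConvexDistMajorant P {x | (y, x) ∈ S} (G y)

lemma hasMeasurableMajorants_zero {Ω : Fin 0 → Type*} [∀ i, MeasurableSpace (Ω i)]
    (μ : ∀ i, Measure (Ω i)) [∀ i, IsProbabilityMeasure (μ i)] {Y : Type*} [MeasurableSpace Y]
    (S : Set (Y × ∀ i, Ω i)) : HasMeasurableMajorants (Measure.pi μ) S := by
  refine ⟨fun _ _ => 1, measurable_const, fun y hy => ⟨fun x => ?_, ?_⟩⟩
  · obtain ⟨a, ha⟩ := nonempty_of_measure_ne_zero hy.ne'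
    have h := convexDistSq_le (subset_convexHull ℝ _ (mem_image_of_mem (mismatch x) ha))
    rw [Finset.univ_eq_empty, Finset.sum_empty] at h
    rw [← ENNReal.ofReal_one, ← exp_zero]
    exact ENNReal.ofReal_le_ofReal (exp_le_exp.2 (by linarith))
  · rw [lintegral_const, measure_univ, mul_one, ENNReal.one_le_inv]
    exact prob_le_one

lemma hasMeasurableMajorants_succ {m : ℕ} {Ω : Fin (m + 1) → Type u}
    [∀ i, MeasurableSpace (Ω i)] (μ : ∀ i, Measure (Ω i)) [∀ i, IsProbabilityMeasure (μ i)]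
    (ih : ∀ {Y : Type u} [MeasurableSpace Y] {S : Set (Y × ∀ j, Ω (Fin.succAbove 0 j))},
      MeasurableSet S → HasMeasurableMajorants (Measure.pi fun j => μ (Fin.succAbove 0 j)) S)
    {Y : Type u} [MeasurableSpace Y] {S : Set (Y × ∀ i, Ω i)} (hS : MeasurableSet S) :
    HasMeasurableMajorants (Measure.pi μ) S := by
  have hB := measurableSet_setOf_mem_essProj (ν := μ 0) hS
  have hT : MeasurableSet {q : (Y × Ω 0) × ∀ j, Ω (Fin.succAbove 0 j) |
      Fin.insertNth 0 q.1.2 q.2 ∈ essRestrict (μ 0) {x | (q.1.1, x) ∈ S}} :=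
    (measurableSet_setOf_mem_essRestrict hS).preimage (measurable_fst.fst.prodMk
      (measurable_insertNth_zero.comp (measurable_fst.snd.prodMk measurable_snd)))
  obtain ⟨G₁, hG₁m, hG₁⟩ := ih hT
  obtain ⟨G₂, hG₂m, hG₂⟩ := ih hB
  have hω : Measurable fun q : Y × ∀ i, Ω i => (q.1, q.2 0) :=
    measurable_fst.prodMk ((measurable_pi_apply 0).comp measurable_snd)
  have hr : Measurable fun q : Y × ∀ i, Ω i => Fin.removeNth 0 q.2 :=
    measurable_removeNth_zero.comp measurable_snd
  have hl : Measurable fun q : Y × ∀ i, Ω i => sectionExponent μ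
      (essRestrict (μ 0) {x | (q.1, x) ∈ S}) (essProj (μ 0) {x | (q.1, x) ∈ S}) (q.2 0) := by
    unfold sectionExponent
    exact measurable_talagrandExponent.comp (((measurable_measure_prodMk_left hT).comp hω).div
      ((measurable_measure_prodMk_left hB).comp measurable_fst)).ennreal_toReal
  have hG : Measurable (Function.uncurry fun y => stepMajorant μ
      (essRestrict (μ 0) {x | (y, x) ∈ S}) (essProj (μ 0) {x | (y, x) ∈ S})
      (fun ω => G₁ (y, ω)) (G₂ y)) := by
    unfold stepMajorant Function.uncurry
    exact (((measurable_const.sub hl).pow_const 2).div_const 4).exp.ennreal_ofReal.mul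
      ((hG₁m.comp (hω.prodMk hr)).pow hl |>.mul
        ((hG₂m.comp (measurable_fst.prodMk hr)).pow (measurable_const.sub hl)))
  exact ⟨_, hG, fun y hy => isConvexDistMajorant_stepMajorant (hS.preimage measurable_prodMk_left)
    hy hG.of_uncurry_left (fun _ => hG₁m.of_uncurry_left) hG₂m.of_uncurry_left
    (fun ω => hG₁ (y, ω)) (hG₂ y)⟩

theorem hasMeasurableMajorants : ∀ {n : ℕ} {Ω : Fin n → Type u} [∀ i, MeasurableSpace (Ω i)]
    (μ : ∀ i, Measure (Ω i)) [∀ i, IsProbabilityMeasure (μ i)] {Y : Type u} [MeasurableSpace Y]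
    {S : Set (Y × ∀ i, Ω i)}, MeasurableSet S → HasMeasurableMajorants (Measure.pi μ) S
  | 0, _, _, μ, _, _, _, S, _ => hasMeasurableMajorants_zero μ S
  | _ + 1, _, _, μ, _, _, _, _, hS =>
    hasMeasurableMajorants_succ μ (fun hS' => hasMeasurableMajorants _ hS') hS

/-- Talagrand's convex distance inequality. -/
theorem measure_mul_measure_le_exp {n : ℕ} {Ω : Fin n → Type u} [∀ i, MeasurableSpace (Ω i)]
    (μ : ∀ i, Measure (Ω i)) [∀ i, IsProbabilityMeasure (μ i)] {A S : Set (∀ i, Ω i)}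
    (hA : MeasurableSet A) {t : ℝ} (ht : ∀ x ∈ S, t ≤ convexDistSq A x) :
    Measure.pi μ A * Measure.pi μ S ≤ ENNReal.ofReal (exp (-t / 4)) := by
  obtain ⟨G, hGm, hG⟩ :=
    hasMeasurableMajorants μ (Y := PUnit) (S := {p | p.2 ∈ A}) (hA.preimage measurable_snd)
  rcases eq_or_ne (Measure.pi μ A) 0 with h0 | h0
  · simp [h0]
  obtain ⟨hle, hint⟩ := hG PUnit.unit (pos_iff_ne_zero.2 h0)
  have hmarkov : ENNReal.ofReal (exp (t / 4)) * Measure.pi μ S ≤ (Measure.pi μ A)⁻¹ :=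
    calc _ ≤ ENNReal.ofReal (exp (t / 4)) *
          Measure.pi μ {x | ENNReal.ofReal (exp (t / 4)) ≤ G PUnit.unit x} := by
          gcongr
          exact fun x hx => le_trans (by gcongr; exact ht x hx) (hle x)
      _ ≤ ∫⁻ x, G PUnit.unit x ∂Measure.pi μ :=
          mul_meas_ge_le_lintegral₀ (hGm.comp measurable_prodMk_left).aemeasurable _
      _ ≤ _ := hint
  rw [neg_div, exp_neg, ENNReal.ofReal_inv_of_pos (exp_pos _), ENNReal.le_inv_iff_mul_le]
  rw [ENNReal.le_inv_iff_mul_le] at hmarkov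
  calc _ = ENNReal.ofReal (exp (t / 4)) * Measure.pi μ S * Measure.pi μ A := by ring
    _ ≤ 1 := hmarkov

lemma measure_mul_measure_le_exp_sq {n : ℕ} {Ω : Fin n → Type u} [∀ i, MeasurableSpace (Ω i)]
    (μ : ∀ i, Measure (Ω i)) [∀ i, IsProbabilityMeasure (μ i)] {F : (∀ i, Ω i) → ℝ}
    (hFm : Measurable F)
    (hF : ∀ x, ∃ a : Fin n → ℝ, ∑ i, a i ^ 2 = 1 ∧ ∀ y, F x ≤ F y + ∑ i, a i * mismatch x y i)
    (K : ℝ) {r : ℝ} (hr : 0 ≤ r) :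
    Measure.pi μ {x | F x ≤ K} * Measure.pi μ {x | K + r ≤ F x} ≤
      ENNReal.ofReal (exp (-r ^ 2 / 4)) := by
  rcases eq_empty_or_nonempty {x | F x ≤ K} with h | hA
  · simp [h]
  refine measure_mul_measure_le_exp μ (measurableSet_le hFm measurable_const) fun x hx => ?_
  obtain ⟨a, ha, hFx⟩ := hF x
  exact sq_le_convexDistSq hA ha hFx (fun _ hy => hy) hr hx

lemma le_two_mul_of_half_le {a b c : ℝ≥0∞} (ha : 1 / 2 ≤ a) (h : a * b ≤ c) : b ≤ 2 * c :=
  calc b = 2 * (1 / 2 * b) := by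
        rw [← mul_assoc, ENNReal.mul_div_cancel two_ne_zero ENNReal.ofNat_ne_top, one_mul]
    _ ≤ 2 * c := by gcongr; exact (mul_le_mul_of_nonneg_right ha zero_le).trans h

end ConvexDistance

open ConvexDistance in
/-- Concentration around a median for functions satisfying the one-sided Lipschitz condition
`F(x) ≤ F(y) + d_a(x, y)` with respect to a weighted Hamming distance with unit-norm weight
depending on `x`: for a product probability measure `P = μ_1 ⊗ ⋯ ⊗ μ_n` and a median `M`
of `F`, `P(|F − M| ≥ r) ≤ 4 e^{−r²/4}` for all `r ≥ 0`. -/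
theorem convex_distance_concentration_median {n : ℕ} {Ω : Fin n → Type*}
    [∀ i, MeasurableSpace (Ω i)]
    (μ : ∀ i, Measure (Ω i)) [∀ i, IsProbabilityMeasure (μ i)]
    (F : (∀ i, Ω i) → ℝ) (hFmeas : Measurable F)
    (hF : ∀ x, ∃ a : Fin n → ℝ, (∀ i, 0 ≤ a i) ∧ (∑ i, (a i) ^ 2 = 1) ∧
      ∀ y, F x ≤ F y + ∑ i, a i * (if x i ≠ y i then 1 else 0))
    (M : ℝ) (hM1 : 1 / 2 ≤ Measure.pi μ {x | M ≤ F x})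
    (hM2 : 1 / 2 ≤ Measure.pi μ {x | F x ≤ M})
    (r : ℝ) (hr : 0 ≤ r) :
    Measure.pi μ {x | r ≤ |F x - M|} ≤ ENNReal.ofReal (4 * Real.exp (-r ^ 2 / 4)) := by
  have hF' : ∀ x, ∃ a : Fin n → ℝ, ∑ i, a i ^ 2 = 1 ∧ ∀ y, F x ≤ F y + ∑ i, a i * mismatch x y i :=
    fun x => (hF x).imp fun _ ha => ha.2
  have hupper := le_two_mul_of_half_le hM2 (measure_mul_measure_le_exp_sq μ hFmeas hF' M hr)
  have hlower := measure_mul_measure_le_exp_sq μ hFmeas hF' (M - r) hr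
  rw [sub_add_cancel, mul_comm] at hlower
  replace hlower := le_two_mul_of_half_le hM1 hlower
  calc Measure.pi μ {x | r ≤ |F x - M|}
      ≤ Measure.pi μ ({x | M + r ≤ F x} ∪ {x | F x ≤ M - r}) := by
        refine measure_mono fun x hx => ?_
        rcases le_abs'.1 (show r ≤ |F x - M| from hx) with h | h
        · exact Or.inr (show F x ≤ M - r by linarith)
        · exact Or.inl (show M + r ≤ F x by linarith)
    _ ≤ 2 * ENNReal.ofReal (exp (-r ^ 2 / 4)) + 2 * ENNReal.ofReal (exp (-r ^ 2 / 4)) :=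
        (measure_union_le _ _).trans (add_le_add hupper hlower)
    _ = ENNReal.ofReal (4 * exp (-r ^ 2 / 4)) := by
        rw [ENNReal.ofReal_mul (by norm_num), ← add_mul]
        norm_num
end
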